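/- arXiv:math/0608273 — 9 statements merged into one kernel-verified Lean document; each statement's English description precedes it below -/
import Mathlib

section
/- Let Ξ: A → U be a random function between finite nonempty sets. Then Ξ is invertible if and only if Ξ separates A (i.e., the variational distance d(a,b) is strictly positive for every pair of distinct a, b ∈ A). -/
open Finset

/-!
If `p a = p b` with `a ≠ b`, the two strict inequalities required of a decoder at `a` and at `b`
contradict each other. Conversely, decode with the quadratic score
`ψ u x = 2 p x u - ‖p x‖²`: its mean under `p a` is `‖p a‖² - ‖p a - p x‖²`, which separation
makes uniquely maximal at `x = a`. Any score becomes a stochastic decoder `ε * ψ u x + h u`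
(a small multiple of it, shifted towards the uniform distribution); the shift adds
`∑ u, p a u * h u` to the mean, the same for every `x`, so it cannot change which `x` wins.
-/

section

variable {A U : Type*} [Fintype A] [Fintype U]

theorem sum_abs_sub_pos_iff (q r : U → ℝ) : 0 < ∑ u, |q u - r u| ↔ q ≠ r := by
  rw [(sum_nonneg fun u _ => abs_nonneg _).lt_iff_ne', Ne,
    sum_eq_zero_iff_of_nonneg fun u _ => abs_nonneg _, not_iff_not, funext_iff]
  simp [sub_eq_zero]

theorem sum_sq_sub_pos_iff (q r : U → ℝ) : 0 < ∑ u, (q u - r u) ^ 2 ↔ q ≠ r := by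
  rw [(sum_nonneg fun u _ => sq_nonneg _).lt_iff_ne', Ne,
    sum_eq_zero_iff_of_nonneg fun u _ => sq_nonneg _, not_iff_not, funext_iff]
  simp [sub_eq_zero]

theorem sum_mul_quadratic_score {q : U → ℝ} (hq : ∑ u, q u = 1) (r : U → ℝ) :
    ∑ u, q u * (2 * r u - ∑ v, r v ^ 2) = ∑ u, q u ^ 2 - ∑ u, (q u - r u) ^ 2 := by
  have hmass : ∑ u, q u * ∑ v, r v ^ 2 = ∑ v, r v ^ 2 := by rw [← sum_mul, hq, one_mul]
  simp only [mul_sub, sum_sub_distrib, hmass, sub_sq, sum_add_distrib]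
  ring_nf

theorem exists_stochastic_pos_mul_add [Nonempty A] (ψ : U → A → ℝ) :
    ∃ ε > 0, ∃ h : U → ℝ,
      (∀ u x, 0 ≤ ε * ψ u x + h u) ∧ ∀ u, ∑ x, (ε * ψ u x + h u) = 1 := by
  obtain ⟨M, hM⟩ := Finite.exists_le fun i : U × A => |ψ i.1 i.2|
  set n : ℝ := (Fintype.card A : ℝ)
  have hn : 0 < n := by simp [n, Fintype.card_pos]
  set K := max M 1
  have hK : 0 < K := lt_max_of_lt_right one_pos
  have hψ : ∀ u x, |ψ u x| ≤ K := fun u x => (hM (u, x)).trans (le_max_left _ _)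
  have hεK : 1 / (2 * n * K) * (n * K) = 1 / 2 := by field_simp
  set ε := 1 / (2 * n * K)
  have hε : 0 < ε := by positivity
  refine ⟨ε, hε, fun u => (1 - ε * ∑ y, ψ u y) / n, fun u x => ?_, fun u => ?_⟩
  · have hsum : ∑ y, ψ u y ≤ n * K := by
      simpa [n] using sum_le_sum fun y (_ : y ∈ univ) => (abs_le.1 (hψ u y)).2
    have hlow : ε * -K ≤ ε * ψ u x := mul_le_mul_of_nonneg_left (abs_le.1 (hψ u x)).1 hε.le
    have hshift : ε * K ≤ (1 - ε * ∑ y, ψ u y) / n := by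
      rw [le_div_iff₀ hn]
      nlinarith [mul_le_mul_of_nonneg_left hsum hε.le]
    linarith
  · rw [sum_add_distrib, ← mul_sum, sum_const, card_univ, nsmul_eq_mul]
    field_simp
    ring

end

theorem stmt0_general {A U : Type*} [Fintype A] [Fintype U] [Nonempty A]
    (p : A → U → ℝ) (hp1 : ∀ a, ∑ u, p a u = 1) :
    (∃ g : U → A → ℝ, (∀ u x, 0 ≤ g u x) ∧ (∀ u, ∑ x, g u x = 1) ∧
        ∀ a x, x ≠ a → ∑ u, p a u * g u x < ∑ u, p a u * g u a) ↔
      (∀ a b : A, a ≠ b → 0 < ∑ u, |p a u - p b u|) := by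
  constructor
  · rintro ⟨g, -, -, hg⟩ a b hab
    rw [sum_abs_sub_pos_iff]
    intro heq
    have hab' := hg a b hab.symm
    have hba := hg b a hab
    rw [heq] at hab'
    exact hab'.asymm hba
  · intro hsep
    obtain ⟨ε, hε, h, hg0, hg1⟩ :=
      exists_stochastic_pos_mul_add fun u x => 2 * p x u - ∑ v, p x v ^ 2
    refine ⟨_, hg0, hg1, fun a x hxa => ?_⟩
    have hscore : ∀ y, ∑ u, p a u * (ε * (2 * p y u - ∑ v, p y v ^ 2) + h u) =
        ε * (∑ u, p a u ^ 2 - ∑ u, (p a u - p y u) ^ 2) + ∑ u, p a u * h u := fun y => by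
      simp only [mul_add, sum_add_distrib, mul_left_comm (p a _) ε, ← mul_sum,
        sum_mul_quadratic_score (hp1 a)]
    have hdist : 0 < ∑ u, (p a u - p x u) ^ 2 :=
      (sum_sq_sub_pos_iff _ _).2 ((sum_abs_sub_pos_iff _ _).1 (hsep a x hxa.symm))
    rw [hscore, hscore]
    simp only [sub_self, zero_pow two_ne_zero, sum_const_zero]
    linarith [mul_pos hε hdist]

/-- A random function `Ξ : A → U` between finite nonempty sets,
given by the distributions `p a` on `U`, is invertible (there is an independent
random function `Γ : U → A`, given by distributions `g u` on `A`, such that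
`P[γ_{ξ_a} = a] > P[γ_{ξ_a} = x]` for every `a` and every `x ≠ a`) if and only if
`Ξ` separates `A` (the variational distance of `p a` and `p b` is positive for all
distinct `a, b`). -/
theorem stmt0 {A U : Type*} [Fintype A] [Fintype U] [Nonempty A] [Nonempty U]
    (p : A → U → ℝ) (hp0 : ∀ a u, 0 ≤ p a u) (hp1 : ∀ a, ∑ u, p a u = 1) :
    (∃ g : U → A → ℝ, (∀ u x, 0 ≤ g u x) ∧ (∀ u, ∑ x, g u x = 1) ∧
        ∀ a x, x ≠ a → ∑ u, p a u * g u x < ∑ u, p a u * g u a) ↔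
      (∀ a b : A, a ≠ b → 0 < ∑ u, |p a u - p b u|) :=
  stmt0_general p hp1
end

section
/- Let Ξ: A → U be a random function between finite nonempty sets. If for some k ≥ 1 the k-fold random function Ξ^(k): A → U^k is invertible, then for every ε > 0 there exists k_ε such that for all k ≥ k_ε there is a random function Γ: U^k → A, independent of Ξ^(k), with P[γ(ξ_a^(k)) = a] > 1 − ε for every a ∈ A. -/
/-!
Invertibility of `Ξ^(k₀)` forces the distributions `p a` to be pairwise distinct, hence
`δ`-separated in the sup distance for some `δ > 0`. Given `k` samples, decode to the `b` whose
`p b` is nearest to the empirical frequency vector. Each empirical frequency has variance at most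
`1 / (4k)`, so by Chebyshev the frequency vector of samples drawn from `p a` lies within `δ / 2`
of `p a` with probability at least `1 - |U| / (k δ²)`, and then the decoder returns `a`.
-/

open Finset Function

section ProductWeights

variable {U : Type*} [Fintype U] {k : ℕ}

theorem sum_prod_mul_prod_eq_prod_sum (q : U → ℝ) (h : Fin k → U → ℝ) :
    ∑ v : Fin k → U, (∏ l, q (v l)) * ∏ l, h l (v l) = ∏ l, ∑ u, q u * h l u := by
  simp_rw [Fintype.prod_sum, prod_mul_distrib]

variable {q : U → ℝ}

theorem sum_prod_eq_one (hq : ∑ u, q u = 1) : ∑ v : Fin k → U, ∏ l, q (v l) = 1 := by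
  simpa [hq] using sum_prod_mul_prod_eq_prod_sum (k := k) q fun _ _ => 1

theorem sum_prod_mul_apply (hq : ∑ u, q u = 1) (i : Fin k) (f : U → ℝ) :
    ∑ v : Fin k → U, (∏ l, q (v l)) * f (v i) = ∑ u, q u * f u := by
  have hfactor (l : Fin k) :
      ∑ u, q u * (if l = i then f u else 1) = if l = i then ∑ u, q u * f u else 1 := by
    split_ifs <;> simp [hq]
  have := sum_prod_mul_prod_eq_prod_sum (k := k) q fun l x => if l = i then f x else 1
  simpa only [hfactor, Fintype.prod_ite_eq'] using this

theorem sum_prod_mul_apply_mul_apply (hq : ∑ u, q u = 1) {i j : Fin k} (hij : i ≠ j)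
    (f g : U → ℝ) :
    ∑ v : Fin k → U, (∏ l, q (v l)) * (f (v i) * g (v j)) =
      (∑ u, q u * f u) * ∑ u, q u * g u := by
  have hfactor (l : Fin k) :
      ∑ u, q u * ((if l = i then f u else 1) * (if l = j then g u else 1)) =
        (if l = i then ∑ u, q u * f u else 1) * (if l = j then ∑ u, q u * g u else 1) := by
    by_cases hi : l = i <;> by_cases hj : l = j <;> simp_all
  have := sum_prod_mul_prod_eq_prod_sum (k := k) q fun l x =>
    (if l = i then f x else 1) * (if l = j then g x else 1)
  simpa only [hfactor, prod_mul_distrib, Fintype.prod_ite_eq'] using this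

theorem sum_prod_mul_sum_sq (hq : ∑ u, q u = 1) {f : U → ℝ} (hf : ∑ u, q u * f u = 0) :
    ∑ v : Fin k → U, (∏ l, q (v l)) * (∑ i, f (v i)) ^ 2 = k * ∑ u, q u * f u ^ 2 := by
  calc ∑ v : Fin k → U, (∏ l, q (v l)) * (∑ i, f (v i)) ^ 2
      = ∑ i, ∑ j, ∑ v : Fin k → U, (∏ l, q (v l)) * (f (v i) * f (v j)) := by
        simp_rw [sq, sum_mul_sum, mul_sum]
        rw [sum_comm]
        exact sum_congr rfl fun _ _ => sum_comm
    _ = ∑ i : Fin k, ∑ u, q u * f u ^ 2 := by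
        refine sum_congr rfl fun i _ => ?_
        rw [sum_eq_single i (fun j _ hji => by
          rw [sum_prod_mul_apply_mul_apply hq (Ne.symm hji), hf, zero_mul]) (by simp)]
        simp_rw [← sq]
        exact sum_prod_mul_apply hq i fun u => f u ^ 2
    _ = k * ∑ u, q u * f u ^ 2 := by simp

end ProductWeights

theorem sum_filter_le_le_sum_mul_div {ι : Type*} [Fintype ι] {w Y : ι → ℝ}
    (hw : ∀ v, 0 ≤ w v) (hY : ∀ v, 0 ≤ Y v) {t : ℝ} (ht : 0 < t) :
    ∑ v with t ≤ Y v, w v ≤ (∑ v, w v * Y v) / t := by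
  rw [le_div_iff₀ ht, sum_mul]
  calc ∑ v with t ≤ Y v, w v * t
      ≤ ∑ v with t ≤ Y v, w v * Y v :=
        sum_le_sum fun v hv => mul_le_mul_of_nonneg_left (mem_filter.1 hv).2 (hw v)
    _ ≤ ∑ v, w v * Y v :=
        sum_le_sum_of_subset_of_nonneg (filter_subset _ _) fun v _ _ => mul_nonneg (hw v) (hY v)

section EmpiricalFrequency

variable {U : Type*} [DecidableEq U] {k : ℕ}

noncomputable def empiricalFreq (v : Fin k → U) (u : U) : ℝ := #{i | v i = u} / k

theorem empiricalFreq_sub (hk : k ≠ 0) (v : Fin k → U) (u : U) (c : ℝ) :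
    empiricalFreq v u - c = (∑ i, ((if v i = u then 1 else 0) - c)) / k := by
  rw [empiricalFreq, natCast_card_filter, sum_sub_distrib]
  field_simp
  simp

variable [Fintype U]

theorem sum_mul_ite_sub_sq {q : U → ℝ} (hq : ∑ u, q u = 1) (u : U) :
    ∑ x, q x * ((if x = u then 1 else 0) - q u) ^ 2 = q u * (1 - q u) := by
  have hsq (x : U) : ((if x = u then 1 else 0) - q u) ^ 2 =
      (if x = u then 1 else 0) * (1 - 2 * q u) + q u ^ 2 := by
    split_ifs <;> ring
  simp_rw [hsq, mul_add, ← mul_assoc, sum_add_distrib, ← sum_mul, mul_boole, sum_ite_eq', hq]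
  simp
  ring

variable {q : U → ℝ}

theorem sum_prod_mul_empiricalFreq_sub_sq_le (hq : ∑ u, q u = 1) (hk : k ≠ 0) (u : U) :
    ∑ v : Fin k → U, (∏ l, q (v l)) * (empiricalFreq v u - q u) ^ 2 ≤ 1 / (4 * k) := by
  have hmean : ∑ x, q x * ((if x = u then 1 else 0) - q u) = 0 := by
    simp [mul_sub, sum_sub_distrib, ← sum_mul, hq]
  simp_rw [empiricalFreq_sub hk, div_pow, ← mul_div_assoc, ← sum_div,
    sum_prod_mul_sum_sq hq hmean, sum_mul_ite_sub_sq hq]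
  rw [div_le_div_iff₀ (by positivity) (by positivity)]
  nlinarith [sq_nonneg (2 * q u - 1)]

theorem sum_prod_filter_le_dist_empiricalFreq_le (hq0 : ∀ u, 0 ≤ q u) (hq : ∑ u, q u = 1)
    (hk : k ≠ 0) {δ : ℝ} (hδ : 0 < δ) :
    ∑ v : Fin k → U with δ ≤ dist (empiricalFreq v) q, ∏ l, q (v l) ≤
      Fintype.card U / (4 * k * δ ^ 2) := by
  set Y : (Fin k → U) → ℝ := fun v => ∑ u, (empiricalFreq v u - q u) ^ 2
  have hw (v : Fin k → U) : 0 ≤ ∏ l, q (v l) := prod_nonneg fun l _ => hq0 (v l)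
  have hsub : univ.filter (fun v => δ ≤ dist (empiricalFreq v) q) ⊆
      univ.filter (fun v => δ ^ 2 ≤ Y v) := by
    intro v hv
    simp only [mem_filter, mem_univ, true_and] at hv ⊢
    rw [← not_lt, dist_pi_lt_iff hδ] at hv
    simp only [not_forall, not_lt] at hv
    obtain ⟨u, hu⟩ := hv
    rw [Real.dist_eq] at hu
    calc δ ^ 2 ≤ (empiricalFreq v u - q u) ^ 2 := sq_le_sq.2 (by rwa [abs_of_pos hδ])
      _ ≤ Y v := single_le_sum (f := fun u => (empiricalFreq v u - q u) ^ 2)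
          (fun u _ => sq_nonneg _) (mem_univ u)
  calc ∑ v : Fin k → U with δ ≤ dist (empiricalFreq v) q, ∏ l, q (v l)
      ≤ ∑ v : Fin k → U with δ ^ 2 ≤ Y v, ∏ l, q (v l) :=
        sum_le_sum_of_subset_of_nonneg hsub fun v _ _ => hw v
    _ ≤ (∑ v, (∏ l, q (v l)) * Y v) / δ ^ 2 :=
        sum_filter_le_le_sum_mul_div hw (fun v => sum_nonneg fun _ _ => sq_nonneg _)
          (by positivity)
    _ = (∑ u, ∑ v : Fin k → U, (∏ l, q (v l)) * (empiricalFreq v u - q u) ^ 2)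
          / δ ^ 2 := by
        simp_rw [Y, mul_sum]; rw [sum_comm]
    _ ≤ (∑ _u : U, (1 : ℝ) / (4 * k)) / δ ^ 2 := by
        gcongr with u hu; exact sum_prod_mul_empiricalFreq_sub_sq_le hq hk u
    _ = Fintype.card U / (4 * k * δ ^ 2) := by
        simp; ring

end EmpiricalFrequency

theorem Function.Injective.of_forall_sum_mul_lt {A V : Type*} [Fintype V] {P : A → V → ℝ}
    (g : V → A → ℝ) (hg : ∀ a x, x ≠ a → ∑ v, P a v * g v x < ∑ v, P a v * g v a) :
    Injective P := by
  intro a b hab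
  by_contra hne
  have hba := hg a b (Ne.symm hne)
  rw [hab] at hba
  exact lt_asymm hba (hg b a hne)

theorem exists_pos_le_dist_of_injective {A X : Type*} [Finite A] [MetricSpace X] {p : A → X}
    (hp : Injective p) : ∃ δ > 0, ∀ a b, a ≠ b → δ ≤ dist (p a) (p b) := by
  rcases isEmpty_or_nonempty A with hA | hA
  · exact ⟨1, one_pos, fun a => isEmptyElim a⟩
  classical
  obtain ⟨x, hx⟩ := Finite.exists_min fun x : A × A =>
    if x.1 = x.2 then 1 else dist (p x.1) (p x.2)
  refine ⟨_, ?_, fun a b hab => by simpa [hab] using hx (a, b)⟩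
  split_ifs with h
  · exact one_pos
  · exact dist_pos.2 (hp.ne h)

theorem eq_of_dist_le_of_dist_lt_half {A X : Type*} [PseudoMetricSpace X] {p : A → X} {δ : ℝ}
    (hsep : ∀ a b, a ≠ b → δ ≤ dist (p a) (p b)) {x : X} {a b : A}
    (ha : dist x (p a) < δ / 2) (hb : dist x (p b) ≤ dist x (p a)) : b = a := by
  by_contra hne
  have := hsep b a hne
  have := dist_triangle_left (p b) (p a) x
  linarith

theorem one_sub_le_sum_prod_mul_ite_nearest {A U : Type*} [DecidableEq A] [Fintype U]
    [DecidableEq U] {p : A → U → ℝ} (hp0 : ∀ a u, 0 ≤ p a u) (hp1 : ∀ a, ∑ u, p a u = 1)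
    {δ : ℝ} (hδ : 0 < δ) (hsep : ∀ a b, a ≠ b → δ ≤ dist (p a) (p b)) {dec : (U → ℝ) → A}
    (hdec : ∀ x b, dist x (p (dec x)) ≤ dist x (p b)) {k : ℕ} (hk : k ≠ 0) (a : A) :
    1 - Fintype.card U / (k * δ ^ 2) ≤
      ∑ v : Fin k → U, (∏ i, p a (v i)) * if a = dec (empiricalFreq v) then 1 else 0 := by
  set w : (Fin k → U) → ℝ := fun v => ∏ i, p a (v i)
  have htail := sum_prod_filter_le_dist_empiricalFreq_le (hp0 a) (hp1 a) hk (half_pos hδ)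
  rw [show 4 * (k : ℝ) * (δ / 2) ^ 2 = k * δ ^ 2 by ring] at htail
  calc 1 - Fintype.card U / (k * δ ^ 2)
      ≤ 1 - ∑ v with δ / 2 ≤ dist (empiricalFreq v) (p a), w v := by linarith
    _ = ∑ v with ¬δ / 2 ≤ dist (empiricalFreq v) (p a), w v := by
        rw [← sum_prod_eq_one (hp1 a), ← sum_filter_add_sum_filter_not univ
          (fun v => δ / 2 ≤ dist (empiricalFreq v) (p a))]
        ring
    _ ≤ ∑ v, w v * if a = dec (empiricalFreq v) then 1 else 0 := by
        rw [sum_filter]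
        refine sum_le_sum fun v _ => ?_
        have hw : 0 ≤ w v := prod_nonneg fun i _ => hp0 a (v i)
        by_cases hfar : δ / 2 ≤ dist (empiricalFreq v) (p a)
        · rw [if_neg (not_not_intro hfar)]
          positivity
        · rw [if_pos hfar,
            if_pos (eq_of_dist_le_of_dist_lt_half hsep (not_le.1 hfar) (hdec _ a)).symm, mul_one]

theorem stmt1_general {A U : Type*} [Fintype A] [Fintype U] [Nonempty A]
    (p : A → U → ℝ) (hp0 : ∀ a u, 0 ≤ p a u) (hp1 : ∀ a, ∑ u, p a u = 1)
    (h : ∃ k0 : ℕ, 1 ≤ k0 ∧ ∃ g : (Fin k0 → U) → A → ℝ,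
        (∀ v x, 0 ≤ g v x) ∧ (∀ v, ∑ x, g v x = 1) ∧
        ∀ a x, x ≠ a →
          ∑ v : Fin k0 → U, (∏ i, p a (v i)) * g v x <
            ∑ v : Fin k0 → U, (∏ i, p a (v i)) * g v a) :
    ∀ ε : ℝ, 0 < ε → ∃ kε : ℕ, ∀ k : ℕ, kε ≤ k →
      ∃ g : (Fin k → U) → A → ℝ,
        (∀ v x, 0 ≤ g v x) ∧ (∀ v, ∑ x, g v x = 1) ∧
        ∀ a, 1 - ε < ∑ v : Fin k → U, (∏ i, p a (v i)) * g v a := by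
  classical
  intro ε hε
  obtain ⟨k0, -, g0, -, -, hg0⟩ := h
  have hp : Injective p := (Injective.of_forall_sum_mul_lt g0 hg0).of_comp
    (f := fun (q : U → ℝ) (v : Fin k0 → U) => ∏ i, q (v i))
  obtain ⟨δ, hδ, hsep⟩ := exists_pos_le_dist_of_injective hp
  choose dec hdec using fun x : U → ℝ => Finite.exists_min fun b => dist x (p b)
  obtain ⟨kε, hkε⟩ := exists_nat_gt (Fintype.card U / (ε * δ ^ 2))
  refine ⟨kε, fun k hk => ⟨fun v x => if x = dec (empiricalFreq v) then 1 else 0,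
    fun v x => by positivity, fun v => by simp, fun a => ?_⟩⟩
  have hk' : (Fintype.card U : ℝ) / (ε * δ ^ 2) < k := hkε.trans_le (by exact_mod_cast hk)
  have hkpos : (0 : ℝ) < k := lt_of_le_of_lt (by positivity) hk'
  refine (sub_lt_sub_left ?_ 1).trans_le (one_sub_le_sum_prod_mul_ite_nearest hp0 hp1 hδ hsep
    hdec (Nat.cast_pos.1 hkpos).ne' a)
  rw [div_lt_iff₀ (by positivity)] at hk' ⊢
  linarith

/-- If for some `k₀ ≥ 1` the `k₀`-fold random function `Ξ^(k₀)` is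
invertible, then for every `ε > 0` there is `kε` such that for all `k ≥ kε` there is a
random function `Γ : U^k → A` returning every `a` with probability `> 1 - ε`. -/
theorem stmt1 {A U : Type*} [Fintype A] [Fintype U] [Nonempty A] [Nonempty U]
    (p : A → U → ℝ) (hp0 : ∀ a u, 0 ≤ p a u) (hp1 : ∀ a, ∑ u, p a u = 1)
    (h : ∃ k0 : ℕ, 1 ≤ k0 ∧ ∃ g : (Fin k0 → U) → A → ℝ,
        (∀ v x, 0 ≤ g v x) ∧ (∀ v, ∑ x, g v x = 1) ∧
        ∀ a x, x ≠ a →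
          ∑ v : Fin k0 → U, (∏ i, p a (v i)) * g v x <
            ∑ v : Fin k0 → U, (∏ i, p a (v i)) * g v a) :
    ∀ ε : ℝ, 0 < ε → ∃ kε : ℕ, ∀ k : ℕ, kε ≤ k →
      ∃ g : (Fin k → U) → A → ℝ,
        (∀ v x, 0 ≤ g v x) ∧ (∀ v, ∑ x, g v x = 1) ∧
        ∀ a, 1 - ε < ∑ v : Fin k → U, (∏ i, p a (v i)) * g v a :=
  stmt1_general p hp0 hp1 h
end

section
/- Let Ξ: A → U be a random function between finite nonempty sets. Then Ξ separates A if and only if for every ε > 0 there exists k_ε such that for all k ≥ k_ε there is a random function Γ: U^k → A, independent of Ξ^(k), with P[γ(ξ_a^(k)) = a] > 1 − ε for every a ∈ A. -/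
/-!
Decode `k` samples to the `a` whose distribution `p a` is nearest to their empirical
distribution. If `δ > 0` is the least distance between `p a` and `p b` for `a ≠ b`, decoding
succeeds whenever the empirical distribution of samples from `p a` lies within `δ / 2` of `p a`.
The letter counts are sums of `k` independent bounded variables, so the squared deviation has
mean at most `|U| k` (Cauchy–Schwarz over `U`), and Chebyshev's inequality bounds the failure
probability by `4 |U| / (k δ²)`. Conversely, if `p a = p b` with `a ≠ b`, the samples cannot
tell `a` from `b`: the two success probabilities of any decoder add up to at most `1`.
-/

open Finset

section ProductWeights

variable {U : Type*} [Fintype U] {k : ℕ} {q : U → ℝ}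

theorem sum_prod_apply_eq_one (hq : ∑ u, q u = 1) : ∑ v : Fin k → U, ∏ i, q (v i) = 1 := by
  simp [← Fintype.prod_sum, hq]

theorem sum_prod_apply_mul_prod_eq_prod_sum (hq : ∑ u, q u = 1) (s : Finset (Fin k))
    (f : Fin k → U → ℝ) :
    ∑ v : Fin k → U, (∏ l, q (v l)) * ∏ l ∈ s, f l (v l) = ∏ l ∈ s, ∑ u, q u * f l u := by
  classical
  calc ∑ v : Fin k → U, (∏ l, q (v l)) * ∏ l ∈ s, f l (v l)
      = ∑ v : Fin k → U, ∏ l, q (v l) * (if l ∈ s then f l (v l) else 1) := by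
        simp only [prod_mul_distrib, prod_ite_mem_eq]
    _ = ∏ l, ∑ u, q u * (if l ∈ s then f l u else 1) :=
        (Fintype.prod_sum fun l u => q u * if l ∈ s then f l u else 1).symm
    _ = ∏ l, if l ∈ s then ∑ u, q u * f l u else 1 := by
        congr! 1 with l; split_ifs <;> simp [hq]
    _ = ∏ l ∈ s, ∑ u, q u * f l u := prod_ite_mem_eq s _

theorem sum_prod_apply_mul_apply (hq : ∑ u, q u = 1) (i : Fin k) (F : U → ℝ) :
    ∑ v : Fin k → U, (∏ l, q (v l)) * F (v i) = ∑ u, q u * F u := by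
  simpa using sum_prod_apply_mul_prod_eq_prod_sum hq {i} fun _ => F

theorem sum_prod_apply_mul_apply_mul_apply (hq : ∑ u, q u = 1) {i j : Fin k} (hij : i ≠ j)
    (F G : U → ℝ) :
    ∑ v : Fin k → U, (∏ l, q (v l)) * (F (v i) * G (v j))
      = (∑ u, q u * F u) * ∑ u, q u * G u := by
  classical
  simpa [prod_pair hij, hij.symm] using
    sum_prod_apply_mul_prod_eq_prod_sum hq {i, j} fun l => if l = i then F else G

theorem sum_prod_apply_mul_sum_sq (hq : ∑ u, q u = 1) {F : U → ℝ} (hF : ∑ u, q u * F u = 0) :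
    ∑ v : Fin k → U, (∏ l, q (v l)) * (∑ i, F (v i)) ^ 2 = k * ∑ u, q u * F u ^ 2 := by
  calc ∑ v : Fin k → U, (∏ l, q (v l)) * (∑ i, F (v i)) ^ 2
      = ∑ i, ∑ j, ∑ v : Fin k → U, (∏ l, q (v l)) * (F (v i) * F (v j)) := by
        simp only [sq, sum_mul_sum]
        simp only [mul_sum]
        rw [sum_comm]
        exact sum_congr rfl fun _ _ => sum_comm
    _ = ∑ i : Fin k, ∑ j : Fin k, if i = j then ∑ u, q u * F u ^ 2 else 0 := by
        refine sum_congr rfl fun i _ => sum_congr rfl fun j _ => ?_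
        split_ifs with hij
        · subst hij; simpa only [sq] using sum_prod_apply_mul_apply hq i (fun u => F u * F u)
        · rw [sum_prod_apply_mul_apply_mul_apply hq hij, hF, zero_mul]
    _ = k * ∑ u, q u * F u ^ 2 := by simp

end ProductWeights

section MinimumDistanceDecoding

variable {U : Type*} [Fintype U] [DecidableEq U] {k : ℕ}

/-- `k` times the variational distance between the empirical distribution of `v` and `q`. -/
def empiricalDist (q : U → ℝ) (v : Fin k → U) : ℝ :=
  ∑ u, |∑ i, ((if v i = u then 1 else 0) - q u)|

theorem mul_sum_abs_sub_le_empiricalDist_add (q r : U → ℝ) (v : Fin k → U) :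
    k * ∑ u, |q u - r u| ≤ empiricalDist q v + empiricalDist r v := by
  rw [empiricalDist, empiricalDist, ← sum_add_distrib, mul_sum]
  refine sum_le_sum fun u _ => ?_
  calc (k : ℝ) * |q u - r u|
      = |∑ i, ((if v i = u then 1 else 0) - r u) - ∑ i, ((if v i = u then 1 else 0) - q u)| := by
        simp only [← sum_sub_distrib, sub_sub_sub_cancel_left, sum_const, card_univ,
          Fintype.card_fin, nsmul_eq_mul, abs_mul, Nat.abs_cast]
    _ ≤ _ := (abs_sub _ _).trans_eq (add_comm _ _)

theorem sum_mul_indicator_sub_eq_zero {q : U → ℝ} (hq : ∑ u, q u = 1) (u : U) :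
    ∑ x, q x * ((if x = u then 1 else 0) - q u) = 0 := by
  simp [mul_sub, ← sum_mul, hq]

theorem sum_mul_indicator_sub_sq {q : U → ℝ} (hq : ∑ u, q u = 1) (u : U) :
    ∑ x, q x * ((if x = u then 1 else 0) - q u) ^ 2 = q u - q u ^ 2 := by
  have h (x : U) : ((if x = u then 1 else 0) - q u) ^ 2
      = (if x = u then 1 else 0) * (1 - 2 * q u) + q u ^ 2 := by
    split_ifs <;> ring
  calc ∑ x, q x * ((if x = u then 1 else 0) - q u) ^ 2
      = (∑ x, q x * if x = u then 1 else 0) * (1 - 2 * q u) + (∑ x, q x) * q u ^ 2 := by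
        simp only [h, mul_add, sum_add_distrib, sum_mul, mul_assoc]
    _ = q u - q u ^ 2 := by
        simp only [mul_ite, mul_one, mul_zero, sum_ite_eq', mem_univ, if_true, hq]
        ring

theorem sum_prod_apply_mul_empiricalDist_sq_le {q : U → ℝ} (hq0 : ∀ u, 0 ≤ q u)
    (hq1 : ∑ u, q u = 1) :
    ∑ v : Fin k → U, (∏ l, q (v l)) * empiricalDist q v ^ 2 ≤ Fintype.card U * k := by
  set X : U → (Fin k → U) → ℝ := fun u v => ∑ i, ((if v i = u then 1 else 0) - q u)
  have hX (u : U) : ∑ v : Fin k → U, (∏ l, q (v l)) * X u v ^ 2 = k * (q u - q u ^ 2) := by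
    rw [sum_prod_apply_mul_sum_sq hq1 (sum_mul_indicator_sub_eq_zero hq1 u),
      sum_mul_indicator_sub_sq hq1 u]
  have hCS (v : Fin k → U) : empiricalDist q v ^ 2 ≤ Fintype.card U * ∑ u, X u v ^ 2 := by
    have h := sq_sum_le_card_mul_sum_sq (s := univ) (f := fun u => |X u v|)
    simp only [sq_abs, card_univ] at h
    exact h
  calc ∑ v : Fin k → U, (∏ l, q (v l)) * empiricalDist q v ^ 2
      ≤ ∑ v : Fin k → U, (∏ l, q (v l)) * (Fintype.card U * ∑ u, X u v ^ 2) :=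
        sum_le_sum fun v _ =>
          mul_le_mul_of_nonneg_left (hCS v) (prod_nonneg fun l _ => hq0 (v l))
    _ = Fintype.card U * ∑ u, ∑ v : Fin k → U, (∏ l, q (v l)) * X u v ^ 2 := by
        simp only [mul_sum, mul_left_comm _ (Fintype.card U : ℝ)]
        exact sum_comm
    _ ≤ Fintype.card U * ∑ u, k * q u := by
        simp only [hX]
        gcongr
        exact sub_le_self _ (sq_nonneg _)
    _ = Fintype.card U * k := by rw [← mul_sum, hq1, mul_one]

variable {A : Type*} [Finite A] [Nonempty A]

noncomputable def minDistDecoder (p : A → U → ℝ) (v : Fin k → U) : A :=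
  (Finite.exists_min fun b => empiricalDist (p b) v).choose

theorem empiricalDist_minDistDecoder_le (p : A → U → ℝ) (v : Fin k → U) (b : A) :
    empiricalDist (p (minDistDecoder p v)) v ≤ empiricalDist (p b) v :=
  (Finite.exists_min fun b => empiricalDist (p b) v).choose_spec b

theorem minDistDecoder_eq_of_two_mul_empiricalDist_lt {p : A → U → ℝ} {δ : ℝ}
    (hsep : ∀ a b, a ≠ b → δ ≤ ∑ u, |p a u - p b u|) {a : A} {v : Fin k → U}
    (ha : 2 * empiricalDist (p a) v < k * δ) : minDistDecoder p v = a := by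
  by_contra hne
  linarith [empiricalDist_minDistDecoder_le p v a,
    mul_sum_abs_sub_le_empiricalDist_add (p a) (p (minDistDecoder p v)) v,
    mul_le_mul_of_nonneg_left (hsep a _ (Ne.symm hne)) (Nat.cast_nonneg (α := ℝ) k)]

theorem one_sub_le_sum_prod_mul_minDistDecoder [DecidableEq A] {p : A → U → ℝ}
    (hp0 : ∀ a u, 0 ≤ p a u) (hp1 : ∀ a, ∑ u, p a u = 1) {δ : ℝ} (hδ : 0 < δ)
    (hsep : ∀ a b, a ≠ b → δ ≤ ∑ u, |p a u - p b u|) (hk : 0 < k) (a : A) :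
    1 - 4 * Fintype.card U / (k * δ ^ 2)
      ≤ ∑ v : Fin k → U, (∏ i, p a (v i)) * if minDistDecoder p v = a then 1 else 0 := by
  set s : ℝ := k * δ / 2 with hs_def
  have hs : 0 < s := by positivity
  -- Chebyshev's inequality in pointwise form
  have hpoint (v : Fin k → U) :
      1 - (empiricalDist (p a) v / s) ^ 2 ≤ if minDistDecoder p v = a then 1 else 0 := by
    by_cases hv : empiricalDist (p a) v < s
    · have hdec : minDistDecoder p v = a :=
        minDistDecoder_eq_of_two_mul_empiricalDist_lt hsep (by linarith [hs_def])
      rw [if_pos hdec]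
      exact sub_le_self _ (sq_nonneg _)
    · have : 1 ≤ empiricalDist (p a) v / s := (one_le_div hs).mpr (not_lt.mp hv)
      have : (0 : ℝ) ≤ if minDistDecoder p v = a then 1 else 0 := by split_ifs <;> norm_num
      nlinarith
  calc 1 - 4 * Fintype.card U / (k * δ ^ 2)
      = 1 - Fintype.card U * k / s ^ 2 := by
        field_simp
        ring
    _ ≤ 1 - (∑ v : Fin k → U, (∏ i, p a (v i)) * empiricalDist (p a) v ^ 2) / s ^ 2 := by
        gcongr
        exact sum_prod_apply_mul_empiricalDist_sq_le (hp0 a) (hp1 a)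
    _ = ∑ v : Fin k → U, (∏ i, p a (v i)) * (1 - (empiricalDist (p a) v / s) ^ 2) := by
        simp only [mul_sub, mul_one, sum_sub_distrib, sum_prod_apply_eq_one (hp1 a), sum_div,
          div_pow, mul_div_assoc]
    _ ≤ _ := sum_le_sum fun v _ =>
        mul_le_mul_of_nonneg_left (hpoint v) (prod_nonneg fun i _ => hp0 a (v i))

end MinimumDistanceDecoding

theorem exists_pos_forall_le_of_forall_pos {A : Type*} [Finite A] [Nonempty A]
    {d : A → A → ℝ} (hd : ∀ a b, a ≠ b → 0 < d a b) :
    ∃ δ > 0, ∀ a b, a ≠ b → δ ≤ d a b := by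
  classical
  obtain ⟨x, hx⟩ := Finite.exists_min fun ab : A × A => if ab.1 = ab.2 then 1 else d ab.1 ab.2
  refine ⟨_, ?_, fun a b hab => (hx (a, b)).trans_eq (if_neg hab)⟩
  split_ifs with h
  exacts [one_pos, hd _ _ h]

theorem sum_prod_apply_mul_add_le_one {A U : Type*} [Fintype A] [Fintype U] {k : ℕ}
    {q : U → ℝ} (hq0 : ∀ u, 0 ≤ q u) (hq1 : ∑ u, q u = 1) {g : (Fin k → U) → A → ℝ}
    (hg0 : ∀ v x, 0 ≤ g v x) (hg1 : ∀ v, ∑ x, g v x = 1) {a b : A} (hab : a ≠ b) :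
    ∑ v : Fin k → U, (∏ i, q (v i)) * g v a + ∑ v : Fin k → U, (∏ i, q (v i)) * g v b ≤ 1 := by
  classical
  have hpair (v : Fin k → U) : g v a + g v b ≤ 1 := by
    rw [← sum_pair hab, ← hg1 v]
    exact sum_le_univ_sum_of_nonneg (hg0 v)
  calc ∑ v : Fin k → U, (∏ i, q (v i)) * g v a + ∑ v : Fin k → U, (∏ i, q (v i)) * g v b
      ≤ ∑ v : Fin k → U, (∏ i, q (v i)) * 1 := by
        rw [← sum_add_distrib]
        exact sum_le_sum fun v _ => by
          rw [← mul_add]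
          exact mul_le_mul_of_nonneg_left (hpair v) (prod_nonneg fun i _ => hq0 (v i))
    _ = 1 := by simp only [mul_one, sum_prod_apply_eq_one hq1]

theorem stmt2_general {A U : Type*} [Fintype A] [Fintype U] [Nonempty A]
    (p : A → U → ℝ) (hp0 : ∀ a u, 0 ≤ p a u) (hp1 : ∀ a, ∑ u, p a u = 1) :
    (∀ a b : A, a ≠ b → 0 < ∑ u, |p a u - p b u|) ↔
      (∀ ε : ℝ, 0 < ε → ∃ kε : ℕ, ∀ k : ℕ, kε ≤ k →
        ∃ g : (Fin k → U) → A → ℝ,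
          (∀ v x, 0 ≤ g v x) ∧ (∀ v, ∑ x, g v x = 1) ∧
          ∀ a, 1 - ε < ∑ v : Fin k → U, (∏ i, p a (v i)) * g v a) := by
  classical
  constructor
  · intro hsep ε hε
    obtain ⟨δ, hδ, hδsep⟩ := exists_pos_forall_le_of_forall_pos hsep
    obtain ⟨K, hK⟩ := exists_nat_gt (4 * Fintype.card U / (δ ^ 2 * ε))
    refine ⟨K + 1, fun k hk => ⟨fun v x => if minDistDecoder p v = x then 1 else 0,
      fun v x => by positivity, fun v => by simp, fun a => ?_⟩⟩
    have hk0 : 0 < k := by omega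
    have hkK : (K : ℝ) ≤ k := by exact_mod_cast (Nat.le_succ K).trans hk
    have herr : 4 * Fintype.card U / (k * δ ^ 2) < ε := by
      rw [div_lt_iff₀ (by positivity)]
      rw [div_lt_iff₀ (by positivity)] at hK
      linarith [mul_le_mul_of_nonneg_right hkK (by positivity : (0 : ℝ) ≤ δ ^ 2 * ε)]
    linarith [one_sub_le_sum_prod_mul_minDistDecoder hp0 hp1 hδ hδsep hk0 a]
  · intro h a b hab
    obtain ⟨u, hu⟩ : ∃ u, p a u ≠ p b u := by
      by_contra! hpab
      obtain ⟨kε, hkε⟩ := h (1 / 2) one_half_pos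
      obtain ⟨g, hg0, hg1, hg⟩ := hkε kε le_rfl
      have hb := hg b
      simp only [← hpab] at hb
      linarith [hg a, sum_prod_apply_mul_add_le_one (hp0 a) (hp1 a) hg0 hg1 hab]
    exact (Finset.sum_pos_iff_of_nonneg fun _ _ => abs_nonneg _).mpr
      ⟨u, mem_univ u, abs_sub_pos.mpr hu⟩

/-- `Ξ` separates `A` (positive variational distance between the
distributions of any two distinct elements) if and only if for every `ε > 0` there is
`kε` such that for all `k ≥ kε` some random function `Γ : U^k → A` recovers every
`a ∈ A` from `k` i.i.d. samples with probability `> 1 - ε`. -/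
theorem stmt2 {A U : Type*} [Fintype A] [Fintype U] [Nonempty A] [Nonempty U]
    (p : A → U → ℝ) (hp0 : ∀ a u, 0 ≤ p a u) (hp1 : ∀ a, ∑ u, p a u = 1) :
    (∀ a b : A, a ≠ b → 0 < ∑ u, |p a u - p b u|) ↔
      (∀ ε : ℝ, 0 < ε → ∃ kε : ℕ, ∀ k : ℕ, kε ≤ k →
        ∃ g : (Fin k → U) → A → ℝ,
          (∀ v x, 0 ≤ g v x) ∧ (∀ v, ∑ x, g v x = 1) ∧
          ∀ a, 1 - ε < ∑ v : Fin k → U, (∏ i, p a (v i)) * g v a) :=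
  stmt2_general p hp0 hp1
end

section
/- Let Υ: U → Z be a random function between finite nonempty sets, given by probabilities P[υ_u = z], and let M be the (|Z|+1) × |U| real matrix whose rows are the vectors (P[υ_u = z])_{u∈U} for each z ∈ Z together with one additional all-ones row. If rank(M) = |U|, then for every finite nonempty set A and every invertible random function Ξ: A → U, the composition Υ∘Ξ: A → Z (given by P[(Υ∘Ξ)_a = z] = Σ_{u∈U} P[ξ_a = u]·P[υ_u = z]) is invertible. -/
open Finset

/-- A random function `A → V`, given by the distributions `p a` on `V`, is invertible if
there is an independent random function `Γ : V → A` (distributions `g v` on `A`) with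
`P[γ_{φ_a} = a] > P[γ_{φ_a} = x]` for every `a ∈ A` and every `x ≠ a`. -/
def IsInvertible {A V : Type*} [Fintype A] [Fintype V] (p : A → V → ℝ) : Prop :=
  ∃ g : V → A → ℝ, (∀ v x, 0 ≤ g v x) ∧ (∀ v, ∑ x, g v x = 1) ∧
    ∀ a x, x ≠ a → ∑ v, p a v * g v x < ∑ v, p a v * g v a

/-!
The rank condition says that every function on `U`, together with the constants, is a linear
combination of the functions `u ↦ P[υ_u = z]`; since these sum to `1`, every function on `U` is
already of the form `u ↦ ∑ z, P[υ_u = z] * d z`. Writing the decoder `Γ` of `Ξ` in this way gives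
signed weights on `Z` which assign to every pair `(a, x)` the same score through `Υ ∘ Ξ` as `Γ`
does through `Ξ`. Signed weights whose scores single out the diagonal are turned into a genuine
random function by centering them over `A`, scaling them down, and adding the uniform distribution
on `A`: this shifts the score of `x` by an amount independent of `x`.
-/

namespace Matrix

theorem vecMul_surjective_of_rank_eq_card {K m n : Type*} [Field K] [Fintype m] [Fintype n]
    (M : Matrix m n K) (hM : M.rank = Fintype.card n) :
    Function.Surjective fun x : m → K => x ᵥ* M := by
  have hrange : Mᵀ.mulVecLin.range = ⊤ := by
    apply Submodule.eq_top_of_finrank_eq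
    rw [Module.finrank_fintype_fun_eq_card, ← hM, ← rank_transpose]
    rfl
  intro f
  obtain ⟨x, hx⟩ := LinearMap.range_eq_top.mp hrange f
  exact ⟨x, by rw [← hx, mulVecLin_apply, mulVec_transpose]⟩

end Matrix

theorem exists_sum_mul_eq_of_rank_eq {K U Z : Type*} [Field K] [Fintype U] [Fintype Z]
    (q : U → Z → K) (hq1 : ∀ u, ∑ z, q u z = 1)
    (hrank : (Matrix.of fun (r : Option Z) (u : U) =>
        Option.elim r 1 (fun z => q u z)).rank = Fintype.card U)
    (f : U → K) : ∃ d : Z → K, ∀ u, ∑ z, q u z * d z = f u := by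
  obtain ⟨c, hc⟩ := Matrix.vecMul_surjective_of_rank_eq_card _ hrank f
  refine ⟨fun z => c (some z) + c none, fun u => ?_⟩
  have hcu := congrFun hc u
  simp only [Matrix.vecMul, dotProduct, Fintype.sum_option, Matrix.of_apply, Option.elim]
    at hcu
  rw [← hcu, mul_one, add_comm]
  simp only [mul_comm (q u _), add_mul, sum_add_distrib, ← mul_sum, hq1, mul_one]

section Scores

variable {A V : Type*} [Fintype A] [Fintype V] {p : A → V → ℝ}

theorem IsInvertible.of_sum_eq_zero_of_sum_mul_lt [Nonempty A] (e : V → A → ℝ)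
    (he : ∀ v, ∑ x, e v x = 0)
    (hlt : ∀ a x, x ≠ a → ∑ v, p a v * e v x < ∑ v, p a v * e v a) :
    IsInvertible p := by
  obtain ⟨B, hB⟩ := Finite.exists_le fun vx : V × A => |e vx.1 vx.2|
  set n : ℝ := (Fintype.card A : ℝ)
  have hn : 0 < n := Nat.cast_pos.mpr Fintype.card_pos
  set ε : ℝ := 1 / (n * (|B| + 1))
  have hε : 0 < ε := by positivity
  have hεB : ε * |B| ≤ 1 / n := by
    rw [div_mul_eq_mul_div, one_mul, div_le_div_iff₀ (by positivity) hn]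
    nlinarith [abs_nonneg B]
  refine ⟨fun v x => 1 / n + ε * e v x, fun v x => ?_, fun v => ?_, fun a x hxa => ?_⟩
  · have hevx : -|B| ≤ e v x := by linarith [neg_abs_le (e v x), hB (v, x), le_abs_self B]
    nlinarith
  · rw [sum_add_distrib, ← mul_sum, he v, sum_const, card_univ, nsmul_eq_mul]
    field_simp
    ring
  · have hscore : ∀ y, ∑ v, p a v * (1 / n + ε * e v y)
        = ∑ v, p a v / n + ε * ∑ v, p a v * e v y := fun y => by
      simp only [mul_add, sum_add_distrib, mul_sum, div_eq_mul_one_div (p a _)]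
      congr 1
      exact sum_congr rfl fun v _ => by ring
    rw [hscore, hscore]
    linarith [mul_lt_mul_of_pos_left (hlt a x hxa) hε]

/-- Centering over `A` does not change the differences of scores. -/
theorem IsInvertible.of_sum_mul_lt [Nonempty A] (s : V → A → ℝ)
    (hlt : ∀ a x, x ≠ a → ∑ v, p a v * s v x < ∑ v, p a v * s v a) :
    IsInvertible p := by
  set n : ℝ := (Fintype.card A : ℝ)
  have hn : n ≠ 0 := Nat.cast_ne_zero.mpr Fintype.card_ne_zero
  refine IsInvertible.of_sum_eq_zero_of_sum_mul_lt (fun v x => s v x - (∑ y, s v y) / n)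
    (fun v => ?_) (fun a x hxa => ?_)
  · rw [sum_sub_distrib, sum_const, card_univ, nsmul_eq_mul]
    field_simp
    ring
  · simp only [mul_sub, sum_sub_distrib]
    linarith [hlt a x hxa]

end Scores

theorem IsInvertible.comp {A U Z : Type*} [Fintype A] [Fintype U] [Fintype Z] [Nonempty A]
    {p : A → U → ℝ} (hp : IsInvertible p) (q : U → Z → ℝ)
    (hq : ∀ f : U → ℝ, ∃ d : Z → ℝ, ∀ u, ∑ z, q u z * d z = f u) :
    IsInvertible fun a z => ∑ u, p a u * q u z := by
  obtain ⟨g, -, -, hg⟩ := hp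
  choose d hd using fun x => hq (g · x)
  have hscore : ∀ a x, ∑ z, (∑ u, p a u * q u z) * d x z = ∑ u, p a u * g u x := by
    intro a x
    simp only [sum_mul, mul_assoc]
    rw [sum_comm]
    simp only [← mul_sum, hd]
  refine IsInvertible.of_sum_mul_lt (fun z x => d x z) fun a x hxa => ?_
  simp only [hscore]
  exact hg a x hxa

theorem stmt3_general {U Z : Type*} [Fintype U] [Fintype Z]
    (q : U → Z → ℝ) (hq1 : ∀ u, ∑ z, q u z = 1)
    (hrank : (Matrix.of fun (r : Option Z) (u : U) =>
        Option.elim r 1 (fun z => q u z)).rank = Fintype.card U)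
    (A : Type) [Fintype A] [Nonempty A]
    (p : A → U → ℝ)
    (hinv : IsInvertible p) :
    IsInvertible (fun a z => ∑ u, p a u * q u z) :=
  hinv.comp q (exists_sum_mul_eq_of_rank_eq q hq1 hrank)

/-- Let `Υ : U → Z` be a random function given by `q u z = P[υ_u = z]`,
and let `M` be the `(|Z|+1) × |U|` matrix whose rows are `(q u z)_{u}` for `z ∈ Z`
together with an all-ones row.  If `rank M = |U|`, then for every finite nonempty `A`
and every invertible random function `Ξ : A → U` the composition `Υ∘Ξ` is invertible. -/
theorem stmt3 {U Z : Type*} [Fintype U] [Fintype Z] [Nonempty U] [Nonempty Z]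
    [DecidableEq U]
    (q : U → Z → ℝ) (hq0 : ∀ u z, 0 ≤ q u z) (hq1 : ∀ u, ∑ z, q u z = 1)
    (hrank : (Matrix.of fun (r : Option Z) (u : U) =>
        Option.elim r 1 (fun z => q u z)).rank = Fintype.card U)
    (A : Type) [Fintype A] [Nonempty A]
    (p : A → U → ℝ) (hp0 : ∀ a u, 0 ≤ p a u) (hp1 : ∀ a, ∑ u, p a u = 1)
    (hinv : IsInvertible p) :
    IsInvertible (fun a z => ∑ u, p a u * q u z) :=
  stmt3_general q hq1 hrank A p hinv
end

section
/- Let Υ: U → Z be a random function between finite nonempty sets, given by probabilities P[υ_u = z], and let M be the (|Z|+1) × |U| real matrix whose rows are the vectors (P[υ_u = z])_{u∈U} for each z ∈ Z together with one additional all-ones row. If rank(M) < |U|, then there exists a finite set A (one may take |A| = 2) and an invertible random function Ξ: A → U such that the composition Υ∘Ξ: A → Z (given by P[(Υ∘Ξ)_a = z] = Σ_{u∈U} P[ξ_a = u]·P[υ_u = z]) is not invertible. -/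
open Finset

/-!
A nonzero kernel vector `c` of `M` sums to zero and is orthogonal to every row `q · z`.
Normalising its positive and negative parts gives two distinct distributions `p₀, p₁` on `U`
with `p₀ - p₁ ∝ c`, so `Υ` maps them to the same distribution on `Z` and no decoder can tell
the two inputs of the composition apart. On the other hand, two distinct distributions are
always distinguishable: the score `s = p₀ - p₁` has strictly larger mean under `p₀`, since the
difference of the means is `∑ (p₀ - p₁)²`, and a decoder answering `0` with probability affine
in `s` (centred between the two means) is correct with probability above `1/2` on both inputs.
-/

namespace Matrix

theorem exists_mulVec_eq_zero_of_rank_lt {m n K : Type*} [Fintype m] [Fintype n] [Field K]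
    (M : Matrix m n K) (h : M.rank < Fintype.card n) : ∃ c ≠ 0, M *ᵥ c = 0 := by
  have hker : 0 < Module.finrank K (LinearMap.ker M.mulVecLin) := by
    have := LinearMap.finrank_range_add_finrank_ker M.mulVecLin
    rw [Module.finrank_fintype_fun_eq_card] at this
    exact Nat.pos_of_ne_zero fun h0 => by unfold Matrix.rank at h; omega
  obtain ⟨⟨c, hc⟩, hc0⟩ := Module.finrank_pos_iff_exists_ne_zero.mp hker
  exact ⟨c, fun h => hc0 (by simp [h]), hc⟩

end Matrix

theorem not_isInvertible_of_eq {A V : Type*} [Fintype A] [Fintype V] (p : A → V → ℝ)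
    {a b : A} (hab : a ≠ b) (h : p a = p b) : ¬ IsInvertible p := by
  rintro ⟨g, -, -, hlt⟩
  have hb := hlt a b hab.symm
  rw [h] at hb
  exact (hlt b a hab).asymm hb

section
variable {V : Type*} [Fintype V]

theorem isInvertible_fin_two_of_abs_le_one (p : Fin 2 → V → ℝ) (f : V → ℝ)
    (hf : ∀ v, |f v| ≤ 1) (h0 : 0 < ∑ v, p 0 v * f v) (h1 : ∑ v, p 1 v * f v < 0) :
    IsInvertible p := by
  have hdiff : ∀ a, ∑ v, p a v * ((1 + f v) / 2) - ∑ v, p a v * ((1 - f v) / 2)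
      = ∑ v, p a v * f v := fun a => by
    rw [← sum_sub_distrib]; exact sum_congr rfl fun v _ => by ring
  refine ⟨fun v => ![(1 + f v) / 2, (1 - f v) / 2], fun v => ?_, fun v => ?_, ?_⟩ <;>
    simp only [Fin.forall_fin_two, Fin.sum_univ_two, Matrix.cons_val_zero, Matrix.cons_val_one,
      ne_eq, not_true_eq_false, zero_ne_one, one_ne_zero, not_false_eq_true, IsEmpty.forall_iff,
      forall_const, true_and, and_true]
  · have := abs_le.mp (hf v)
    constructor <;> linarith
  · ring
  · constructor <;> linarith [hdiff 0, hdiff 1]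

theorem isInvertible_fin_two_of_sum_mul_lt (p : Fin 2 → V → ℝ) (hp : ∀ a, ∑ v, p a v = 1)
    (s : V → ℝ) (hs : ∑ v, p 1 v * s v < ∑ v, p 0 v * s v) : IsInvertible p := by
  set c := (∑ v, p 0 v * s v + ∑ v, p 1 v * s v) / 2 with hc
  set K := ∑ v, |s v - c| + 1
  have hK : 0 < K := by positivity
  have hmean : ∀ a, ∑ v, p a v * ((s v - c) / K) = (∑ v, p a v * s v - c) / K := fun a => by
    simp only [mul_div_assoc', ← sum_div, mul_sub, sum_sub_distrib, ← sum_mul, hp, one_mul]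
  refine isInvertible_fin_two_of_abs_le_one p (fun v => (s v - c) / K) (fun v => ?_) ?_ ?_
  · rw [abs_div, abs_of_pos hK, div_le_one hK]
    linarith [single_le_sum (fun v _ => abs_nonneg (s v - c)) (mem_univ v)]
  · rw [hmean]; exact div_pos (by rw [hc]; linarith) hK
  · rw [hmean]; exact div_neg_of_neg_of_pos (by rw [hc]; linarith) hK

theorem isInvertible_fin_two_of_ne (p : Fin 2 → V → ℝ) (hp : ∀ a, ∑ v, p a v = 1)
    (hne : p 0 ≠ p 1) : IsInvertible p := by
  refine isInvertible_fin_two_of_sum_mul_lt p hp (p 0 - p 1) (sub_pos.mp ?_)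
  obtain ⟨w, hw⟩ := Function.ne_iff.mp hne
  have hw' : p 0 w - p 1 w ≠ 0 := sub_ne_zero.mpr hw
  calc 0 < ∑ v, (p 0 v - p 1 v) ^ 2 :=
        sum_pos' (fun v _ => sq_nonneg _) ⟨w, mem_univ w, by positivity⟩
    _ = _ := by rw [← sum_sub_distrib]; exact sum_congr rfl fun v _ => by rw [Pi.sub_apply]; ring

end

theorem exists_fin_two_distributions_sub_eq_mul {U : Type*} [Fintype U] (c : U → ℝ)
    (hc : c ≠ 0) (hsum : ∑ u, c u = 0) :
    ∃ p : Fin 2 → U → ℝ, (∀ a u, 0 ≤ p a u) ∧ (∀ a, ∑ u, p a u = 1) ∧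
      ∃ t : ℝ, t ≠ 0 ∧ ∀ u, p 0 u - p 1 u = t * c u := by
  have hparts : ∑ u, (c u)⁺ = ∑ u, (c u)⁻ := by
    rw [← sub_eq_zero, ← sum_sub_distrib, ← hsum]; simp only [posPart_sub_negPart]
  have habs : 0 < ∑ u, |c u| := by
    obtain ⟨w, hw⟩ := Function.ne_iff.mp hc
    exact sum_pos' (fun u _ => abs_nonneg _) ⟨w, mem_univ w, abs_pos.mpr hw⟩
  obtain ⟨S, hpos, hneg⟩ : ∃ S, ∑ u, (c u)⁺ = S ∧ ∑ u, (c u)⁻ = S := ⟨_, rfl, hparts.symm⟩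
  have hS : 0 < S := by
    simp only [← posPart_add_negPart, sum_add_distrib, hpos, hneg] at habs
    linarith
  refine ⟨![fun u => (c u)⁺ / S, fun u => (c u)⁻ / S], fun a u => ?_, fun a => ?_,
    S⁻¹, inv_ne_zero hS.ne', ?_⟩
  · fin_cases a <;> exact div_nonneg (by positivity) hS.le
  · fin_cases a <;> simp [← sum_div, hpos, hneg, hS.ne']
  · intro u; simp [div_eq_inv_mul, ← mul_sub]

theorem stmt4_general {U Z : Type*} [Fintype U] [Fintype Z]
    (q : U → Z → ℝ)
    (hrank : (Matrix.of fun (r : Option Z) (u : U) =>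
        Option.elim r 1 (fun z => q u z)).rank < Fintype.card U) :
    ∃ p : Fin 2 → U → ℝ, (∀ a u, 0 ≤ p a u) ∧ (∀ a, ∑ u, p a u = 1) ∧
      IsInvertible p ∧ ¬ IsInvertible (fun a z => ∑ u, p a u * q u z) := by
  obtain ⟨c, hc, hker⟩ := Matrix.exists_mulVec_eq_zero_of_rank_lt _ hrank
  have hsum : ∑ u, c u = 0 := by simpa [Matrix.mulVec, dotProduct] using congrFun hker none
  have hcq : ∀ z, ∑ u, c u * q u z = 0 := fun z => by
    simpa [Matrix.mulVec, dotProduct, mul_comm] using congrFun hker (some z)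
  obtain ⟨p, hp0, hp1, t, ht, hpc⟩ := exists_fin_two_distributions_sub_eq_mul c hc hsum
  refine ⟨p, hp0, hp1, isInvertible_fin_two_of_ne p hp1 fun h => ?_,
    not_isInvertible_of_eq _ zero_ne_one (funext fun z => ?_)⟩
  · obtain ⟨u, hu⟩ := Function.ne_iff.mp hc
    exact mul_ne_zero ht hu (by rw [← hpc u, h, sub_self])
  · rw [← sub_eq_zero, ← sum_sub_distrib]
    simp only [← sub_mul, hpc, mul_assoc, ← mul_sum, hcq, mul_zero]

/-- Let `Υ : U → Z` be a random function given by `q u z = P[υ_u = z]`,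
and let `M` be the `(|Z|+1) × |U|` matrix whose rows are `(q u z)_u` for `z ∈ Z`
together with an all-ones row.  If `rank M < |U|`, then there is an invertible random
function `Ξ` from a two-element set `A` to `U` whose composition with `Υ` is not
invertible. -/
theorem stmt4 {U Z : Type*} [Fintype U] [Fintype Z] [Nonempty U] [Nonempty Z]
    [DecidableEq U]
    (q : U → Z → ℝ) (hq0 : ∀ u z, 0 ≤ q u z) (hq1 : ∀ u, ∑ z, q u z = 1)
    (hrank : (Matrix.of fun (r : Option Z) (u : U) =>
        Option.elim r 1 (fun z => q u z)).rank < Fintype.card U) :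
    ∃ p : Fin 2 → U → ℝ, (∀ a u, 0 ≤ p a u) ∧ (∀ a, ∑ u, p a u = 1) ∧
      IsInvertible p ∧ ¬ IsInvertible (fun a z => ∑ u, p a u * q u z) :=
  stmt4_general q hrank
end

section
/- Let X_1, …, X_k be i.i.d. random variables with values in a finite set U and common distribution p, let p̂ be the empirical distribution, and let U⁺ = {u : p_u > 0}. Then for every δ > 0, P[ d_KL(p̂, p) ≥ δ ] ≤ |U⁺| / (k·δ). -/
/-!
Since `log x ≤ x - 1`, the Kullback–Leibler divergence of `p̂` from `p` is bounded by the
χ²-divergence `∑_{u ∈ U⁺} p̂_u² / p_u - 1`. As `k p̂_u` is binomial with parameters `k, p_u`,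
`E[p̂_u²] = p_u / k + (1 - 1/k) p_u²`, so the expected χ²-divergence is `(|U⁺| - 1) / k`, and
Markov's inequality for the nonnegative χ²-divergence gives the bound.
-/

open Finset
open scoped Classical

/-- The empirical distribution of a sample `v = (X_1, …, X_k)` with values in the
finite set `U`: `p̂_u = (1/k)·#{i : X_i = u}`. -/
noncomputable def empDist {U : Type*} [Fintype U] {k : ℕ} (v : Fin k → U) (u : U) : ℝ :=
  ((Finset.univ.filter fun i => v i = u).card : ℝ) / k

theorem Finset.mul_sum_filter_le_sum_mul {ι : Type*} (s : Finset ι) (w f g : ι → ℝ) (δ : ℝ)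
    (hw : ∀ i ∈ s, 0 ≤ w i) (hfg : ∀ i ∈ s, 0 < w i → f i ≤ g i)
    (hg : ∀ i ∈ s, 0 < w i → 0 ≤ g i) :
    δ * ∑ i ∈ s with δ ≤ f i, w i ≤ ∑ i ∈ s, w i * g i := by
  rw [mul_sum]
  calc ∑ i ∈ s with δ ≤ f i, δ * w i ≤ ∑ i ∈ s with δ ≤ f i, w i * g i := by
        refine sum_le_sum fun i hi => ?_
        obtain ⟨his, hδ⟩ := mem_filter.mp hi
        rcases (hw i his).eq_or_lt with h | h
        · simp [← h]
        · nlinarith [hfg i his h]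
    _ ≤ ∑ i ∈ s, w i * g i := by
        refine sum_le_sum_of_subset_of_nonneg (filter_subset _ _) fun i his _ => ?_
        rcases (hw i his).eq_or_lt with h | h
        · simp [← h]
        · exact mul_nonneg h.le (hg i his h)

section Divergence

variable {U : Type*} [Fintype U]

noncomputable def klDivergence (q p : U → ℝ) : ℝ :=
  ∑ u with 0 < q u, q u * Real.log (q u / p u)

noncomputable def chiSqDivergence (q p : U → ℝ) : ℝ :=
  ∑ u with 0 < p u, q u ^ 2 / p u - 1

variable {q p : U → ℝ}

lemma sum_filter_pos_eq_sum_of_support (hq : ∀ u, 0 ≤ q u) (hqp : ∀ u, 0 < q u → 0 < p u) :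
    ∑ u with 0 < p u, q u = ∑ u, q u :=
  sum_filter_of_ne fun u _ h => hqp u ((hq u).lt_of_ne' h)

lemma chiSqDivergence_nonneg (hp : ∀ u, 0 ≤ p u) (hp1 : ∑ u, p u = 1) (hq : ∀ u, 0 ≤ q u)
    (hqp : ∀ u, 0 < q u → 0 < p u) (hq1 : ∑ u, q u = 1) : 0 ≤ chiSqDivergence q p := by
  have hp1' : ∑ u with 0 < p u, p u = 1 := by
    rw [sum_filter_pos_eq_sum_of_support hp fun _ h => h, hp1]
  have hq1' : ∑ u with 0 < p u, q u = 1 := by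
    rw [sum_filter_pos_eq_sum_of_support hq hqp, hq1]
  calc (0 : ℝ) = ∑ u with 0 < p u, (2 * q u - p u) - 1 := by
        rw [sum_sub_distrib, ← mul_sum, hq1', hp1']; norm_num
    _ ≤ chiSqDivergence q p := by
        refine sub_le_sub_right (sum_le_sum fun u hu => ?_) 1
        have hpu : 0 < p u := (mem_filter.mp hu).2
        -- `q² / p - (2q - p) = (q - p)² / p ≥ 0`
        rw [le_div_iff₀ hpu]
        nlinarith [sq_nonneg (q u - p u)]

lemma klDivergence_le_chiSqDivergence (hq : ∀ u, 0 ≤ q u)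
    (hqp : ∀ u, 0 < q u → 0 < p u) (hq1 : ∑ u, q u = 1) :
    klDivergence q p ≤ chiSqDivergence q p := by
  have hsupp : univ.filter (fun u => 0 < q u) ⊆ univ.filter (fun u => 0 < p u) :=
    monotone_filter_right _ fun u _ => hqp u
  calc klDivergence q p ≤ ∑ u with 0 < q u, (q u ^ 2 / p u - q u) := by
        refine sum_le_sum fun u hu => ?_
        have hqu : 0 < q u := (mem_filter.mp hu).2
        have hpu := hqp u hqu
        calc q u * Real.log (q u / p u) ≤ q u * (q u / p u - 1) :=
              mul_le_mul_of_nonneg_left (Real.log_le_sub_one_of_pos (by positivity)) hqu.le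
          _ = q u ^ 2 / p u - q u := by ring
    _ = ∑ u with 0 < p u, (q u ^ 2 / p u - q u) := by
        refine sum_subset hsupp fun u _ hu => ?_
        have hqu : q u = 0 := ((hq u).eq_of_not_lt fun h => hu (by simpa using h)).symm
        simp [hqu]
    _ = chiSqDivergence q p := by
        rw [chiSqDivergence, sum_sub_distrib, sum_filter_pos_eq_sum_of_support hq hqp, hq1]

end Divergence

section Sample

variable {U : Type*} [Fintype U] {ι : Type*} [Fintype ι] [DecidableEq ι]

lemma sum_prod_eq_one_s7 {p : U → ℝ} (hp1 : ∑ u, p u = 1) : ∑ v : ι → U, ∏ i, p (v i) = 1 := by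
  rw [← Fintype.prod_sum, hp1, prod_const_one]

lemma sum_prod_mul_prod_indicator {p : U → ℝ} (hp1 : ∑ u, p u = 1) (s : Finset ι) (u : U) :
    ∑ v : ι → U, (∏ i, p (v i)) * ∏ i ∈ s, (if v i = u then 1 else 0) = p u ^ #s := by
  have hfactor : ∀ v : ι → U, (∏ i, p (v i)) * ∏ i ∈ s, (if v i = u then 1 else 0) =
      ∏ i, p (v i) * (if i ∈ s then (if v i = u then 1 else 0) else 1) := fun v => by
    rw [prod_mul_distrib, prod_ite_mem, univ_inter]
  have hfactor_sum : ∀ i, ∑ x, p x * (if i ∈ s then (if x = u then 1 else 0) else 1) =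
      if i ∈ s then p u else 1 := fun i => by
    split_ifs
    · simp [mul_ite]
    · simp [hp1]
  rw [sum_congr rfl fun v _ => hfactor v,
    ← Fintype.prod_sum fun i x => p x * (if i ∈ s then (if x = u then 1 else 0) else 1)]
  simp_rw [hfactor_sum, prod_ite_mem, univ_inter, prod_const]

lemma sum_prod_mul_card_sq {p : U → ℝ} (hp1 : ∑ u, p u = 1) (u : U) :
    ∑ v : ι → U, (∏ i, p (v i)) * (#{i | v i = u} : ℝ) ^ 2 =
      Fintype.card ι * p u + Fintype.card ι * (Fintype.card ι - 1) * p u ^ 2 := by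
  have hsq : ∀ v : ι → U, (#{i | v i = u} : ℝ) ^ 2 =
      ∑ i, ∑ j, ∏ m ∈ {i, j}, (if v m = u then (1 : ℝ) else 0) := fun v => by
    rw [natCast_card_filter, sq, sum_mul_sum]
    refine sum_congr rfl fun i _ => sum_congr rfl fun j _ => ?_
    rcases eq_or_ne i j with rfl | hij
    · rw [insert_eq_of_mem (mem_singleton_self i), prod_singleton]; split_ifs <;> simp
    · rw [prod_pair hij]
  have hrow : ∀ i : ι, ∑ j, p u ^ #({i, j} : Finset ι) =
      p u + (Fintype.card ι - 1) * p u ^ 2 := fun i => by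
    have : ∀ j, p u ^ #{i, j} = p u ^ 2 + if i = j then p u - p u ^ 2 else 0 := fun j => by
      rcases eq_or_ne i j with rfl | hij
      · simp
      · simp [card_pair hij, hij]
    simp only [this, sum_add_distrib, sum_const, sum_ite_eq, mem_univ, if_true, card_univ,
      nsmul_eq_mul]
    ring
  calc ∑ v : ι → U, (∏ i, p (v i)) * (#{i | v i = u} : ℝ) ^ 2
      = ∑ i, ∑ j, ∑ v : ι → U, (∏ m, p (v m)) * ∏ m ∈ {i, j}, (if v m = u then 1 else 0) := by
        simp_rw [hsq, mul_sum]
        rw [sum_comm]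
        simp_rw [sum_comm (γ := ι → U) (α := ι)]
    _ = ∑ i : ι, ∑ j, p u ^ #({i, j} : Finset ι) := by
        simp_rw [sum_prod_mul_prod_indicator hp1]
    _ = Fintype.card ι * p u + Fintype.card ι * (Fintype.card ι - 1) * p u ^ 2 := by
        simp only [hrow, sum_const, card_univ, nsmul_eq_mul]
        ring

variable {k : ℕ}

lemma empDist_nonneg (v : Fin k → U) (u : U) : 0 ≤ empDist v u := by
  unfold empDist; positivity

lemma empDist_pos_iff {v : Fin k → U} {u : U} : 0 < empDist v u ↔ ∃ i, v i = u := by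
  constructor
  · intro h
    by_contra! hne
    simp [empDist, hne] at h
  · rintro ⟨i, rfl⟩
    have hk : (0 : ℝ) < k := by exact_mod_cast i.pos
    exact div_pos (by exact_mod_cast card_pos.mpr ⟨i, by simp⟩) hk

lemma sum_empDist (hk : k ≠ 0) (v : Fin k → U) : ∑ u, empDist v u = 1 := by
  have hcard : ∑ u, (#{i | v i = u} : ℝ) = k := by
    rw [← Nat.cast_sum, ← card_eq_sum_card_fiberwise fun i _ => mem_univ (v i), card_univ,
      Fintype.card_fin]
  simp only [empDist]
  rw [← sum_div, hcard, div_self (Nat.cast_ne_zero.mpr hk)]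

lemma pos_of_empDist_pos {p : U → ℝ} (hp0 : ∀ u, 0 ≤ p u) {v : Fin k → U}
    (hv : 0 < ∏ i, p (v i)) {u : U} (hu : 0 < empDist v u) : 0 < p u := by
  obtain ⟨i, rfl⟩ := empDist_pos_iff.mp hu
  exact (hp0 _).lt_of_ne' (prod_ne_zero_iff.mp hv.ne' i (mem_univ i))

lemma sum_prod_mul_chiSqDivergence_empDist {p : U → ℝ} (hp0 : ∀ u, 0 ≤ p u)
    (hp1 : ∑ u, p u = 1) (hk : k ≠ 0) :
    ∑ v : Fin k → U, (∏ i, p (v i)) * chiSqDivergence (empDist v) p =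
      ((#{u | 0 < p u} : ℝ) - 1) / k := by
  have hk' : (k : ℝ) ≠ 0 := Nat.cast_ne_zero.mpr hk
  have hsq : ∀ u, 0 < p u →
      ∑ v : Fin k → U, (∏ i, p (v i)) * (empDist v u ^ 2 / p u) = 1 / k + (1 - 1 / k) * p u :=
    fun u hu => by
      have hsplit : ∑ v : Fin k → U, (∏ i, p (v i)) * (empDist v u ^ 2 / p u) =
          (∑ v : Fin k → U, (∏ i, p (v i)) * (#{i | v i = u} : ℝ) ^ 2) / (k ^ 2 * p u) := by
        rw [sum_div]
        exact sum_congr rfl fun v _ => by rw [empDist]; ring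
      rw [hsplit, sum_prod_mul_card_sq hp1, Fintype.card_fin]
      field_simp
  have hp1' : ∑ u with 0 < p u, p u = 1 := by
    rw [sum_filter_pos_eq_sum_of_support hp0 fun _ h => h, hp1]
  simp only [chiSqDivergence, mul_sub, mul_sum, mul_one]
  rw [sum_sub_distrib, sum_comm, sum_congr rfl fun u hu => hsq u (mem_filter.mp hu).2,
    sum_prod_eq_one_s7 hp1, sum_add_distrib, ← mul_sum, hp1', sum_const, nsmul_eq_mul]
  field_simp
  ring

end Sample

/-- If `X_1, …, X_k` are i.i.d. with common distribution `p` on the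
finite set `U`, `p̂` is the empirical distribution and `U⁺ = {u : p_u > 0}`, then for
every `δ > 0` we have `P[d_KL(p̂, p) ≥ δ] ≤ |U⁺|/(k·δ)`.  (The probability of an event
of samples is the total product weight `∏ i, p (v i)` of the tuples `v` in it.) -/
theorem stmt7 {U : Type*} [Fintype U]
    (p : U → ℝ) (hp0 : ∀ u, 0 ≤ p u) (hp1 : ∑ u, p u = 1)
    (k : ℕ) (hk : 0 < k) (δ : ℝ) (hδ : 0 < δ) :
    ∑ v ∈ Finset.univ.filter (fun v : Fin k → U =>
        δ ≤ ∑ u ∈ Finset.univ.filter (fun u => 0 < empDist v u),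
          empDist v u * Real.log (empDist v u / p u)),
      ∏ i, p (v i) ≤
    ((Finset.univ.filter fun u : U => 0 < p u).card : ℝ) / (k * δ) := by
  have hsupp : ∀ v : Fin k → U, 0 < ∏ i, p (v i) → ∀ u, 0 < empDist v u → 0 < p u :=
    fun v hv u => pos_of_empDist_pos hp0 hv
  have hmarkov := mul_sum_filter_le_sum_mul univ (fun v : Fin k → U => ∏ i, p (v i))
    (fun v => klDivergence (empDist v) p) (fun v => chiSqDivergence (empDist v) p) δ
    (fun v _ => prod_nonneg fun i _ => hp0 (v i))
    (fun v _ hv => klDivergence_le_chiSqDivergence (empDist_nonneg v) (hsupp v hv)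
      (sum_empDist hk.ne' v))
    (fun v _ hv => chiSqDivergence_nonneg hp0 hp1 (empDist_nonneg v) (hsupp v hv)
      (sum_empDist hk.ne' v))
  rw [sum_prod_mul_chiSqDivergence_empDist hp0 hp1 hk.ne'] at hmarkov
  change ∑ v with δ ≤ klDivergence (empDist v) p, ∏ i, p (v i) ≤ _
  calc _ = (δ * ∑ v with δ ≤ klDivergence (empDist v) p, ∏ i, p (v i)) / δ := by
        field_simp
    _ ≤ ((#{u | 0 < p u} : ℝ) - 1) / k / δ := by gcongr
    _ ≤ (#{u | 0 < p u} : ℝ) / k / δ := by gcongr; linarith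
    _ = _ := div_div _ _ _
end

section
/- Let Ξ: B → U be a parametric random function with finite A and U, fix (a, θ) ∈ B, and suppose d_{(a,θ)} > 0. Let c₁ = 2/(2 − √3)² and let ε > 0. If k ≥ c₁·|U⁺| / (ε·d_{(a,θ)}⁴), then with probability at least 1 − ε over k i.i.d. samples (u_1, …, u_k) drawn from the distribution of ξ_{(a,θ)}, the strict inequality Π_{i=1}^k P[ξ_{(a,θ)} = u_i] > Π_{i=1}^k P[ξ_{(b,θ')} = u_i] holds simultaneously for every b ≠ a and every θ' ∈ Θ(b); consequently maximum likelihood estimation correctly returns a with probability at least 1 − ε. -/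
open Finset
open scoped Classical

set_option maxHeartbeats 1000000
open Finset
open scoped Classical

lemma sum_prod_eq {U : Type*} [Fintype U] (k : ℕ) (f : Fin k → U → ℝ) :
    ∑ v : Fin k → U, ∏ i, f i (v i) = ∏ i, ∑ u, f i u :=
  (Fintype.prod_sum f).symm

lemma var_lemma {U : Type*} [Fintype U] (k : ℕ) (p : U → ℝ) (hp1 : ∑ u, p u = 1) (u : U) :
    ∑ v : Fin k → U, (∏ i, p (v i)) * ((∑ i, (if v i = u then (1:ℝ) else 0)) - (k : ℝ) * p u) ^ 2
      = k * (p u - p u ^ 2) := by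
  classical
  set g : U → ℝ := fun w => (if w = u then (1:ℝ) else 0) - p u with hg
  have hsub : ∀ v : Fin k → U, (∑ i, (if v i = u then (1:ℝ) else 0)) - (k:ℝ) * p u
      = ∑ i, g (v i) := by
    intro v
    rw [Finset.sum_sub_distrib]
    simp [g, Finset.card_univ, mul_comm]
  have Eij : ∀ i j : Fin k, (∑ v : Fin k → U, (∏ l, p (v l)) * (g (v i) * g (v j)))
      = if i = j then p u - p u ^ 2 else 0 := by
    intro i j
    have hrw : ∀ v : Fin k → U, (∏ l, p (v l)) * (g (v i) * g (v j))
        = ∏ l, (p (v l) * ((if l = i then g (v l) else 1) * (if l = j then g (v l) else 1))) := by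
      intro v
      rw [Finset.prod_mul_distrib]
      congr 1
      rw [Finset.prod_mul_distrib]
      congr 1 <;> simp
    rw [Finset.sum_congr rfl (fun v _ => hrw v),
      sum_prod_eq k (fun l w => p w * ((if l = i then g w else 1) * (if l = j then g w else 1)))]
    have hFi : (∑ w, p w * (g w * g w)) = p u - p u ^ 2 := by
      have e : ∀ w, p w * (g w * g w)
          = (if w = u then p w * (1 - 2 * p u) else 0) + p w * (p u * p u) := by
        intro w
        by_cases h : w = u <;> simp [g, h] <;> ring
      rw [Finset.sum_congr rfl (fun w _ => e w), Finset.sum_add_distrib,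
        Finset.sum_ite_eq' Finset.univ u (fun w => p w * (1 - 2 * p u)),
        ← Finset.sum_mul, hp1]
      simp; ring
    have hFg : (∑ w, p w * g w) = 0 := by
      have e : ∀ w, p w * g w = (if w = u then p w else 0) - p w * p u := by
        intro w
        by_cases h : w = u <;> simp [g, h] <;> ring
      rw [Finset.sum_congr rfl (fun w _ => e w), Finset.sum_sub_distrib,
        Finset.sum_ite_eq' Finset.univ u (fun w => p w), ← Finset.sum_mul, hp1]
      simp
    by_cases hij : i = j
    · subst hij
      rw [if_pos rfl]
      rw [Finset.prod_eq_single i (fun l _ hl => by simp [if_neg hl, hp1])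
        (fun h => absurd (Finset.mem_univ i) h)]
      simpa using hFi
    · rw [if_neg hij]
      refine Finset.prod_eq_zero (Finset.mem_univ i) ?_
      simp only [if_pos rfl, if_neg hij]
      simpa using hFg
  calc ∑ v : Fin k → U, (∏ i, p (v i)) * ((∑ i, (if v i = u then (1:ℝ) else 0)) - (k : ℝ) * p u) ^ 2
      = ∑ v : Fin k → U, ∑ i, ∑ j, (∏ l, p (v l)) * (g (v i) * g (v j)) := by
        refine Finset.sum_congr rfl fun v _ => ?_
        rw [hsub v, sq, Finset.sum_mul_sum]
        rw [Finset.mul_sum]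
        exact Finset.sum_congr rfl fun i _ => by rw [Finset.mul_sum]
    _ = ∑ i : Fin k, ∑ j : Fin k, ∑ v : Fin k → U, (∏ l, p (v l)) * (g (v i) * g (v j)) := by
        rw [Finset.sum_comm]
        exact Finset.sum_congr rfl fun i _ => Finset.sum_comm
    _ = ∑ i : Fin k, ∑ j : Fin k, if i = j then p u - p u ^ 2 else 0 := by
        exact Finset.sum_congr rfl fun i _ => Finset.sum_congr rfl fun j _ => Eij i j
    _ = k * (p u - p u ^ 2) := by
        simp [Finset.sum_ite_eq]; ring

lemma key_poly (d c : ℝ) (hd : 0 < d) (hd2 : d ≤ 2) (hc : 0 ≤ c)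
    (hcx : c ^ 2 ≤ 0.036 * d ^ 4) :
    0.144 * d ^ 4 < (d - c) ^ 2 * (1 + 0.036 * d ^ 4) := by
  nlinarith [sq_nonneg (d - c), mul_nonneg (sub_nonneg.2 hd2) hc, mul_nonneg (sub_nonneg.2 hd2) (sub_nonneg.2 hd2), sq_nonneg (d*d - 2*c), mul_pos hd hd, mul_nonneg (mul_nonneg (sub_nonneg.2 hd2) hd.le) hc, sq_nonneg (d - 2*c), mul_nonneg (sub_nonneg.2 hcx) (sub_nonneg.2 hd2), mul_nonneg (sub_nonneg.2 hcx) hc, mul_nonneg (sub_nonneg.2 hcx) hd.le, sq_nonneg (c*d - 0.3*d*d)]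

lemma core_poly (d c x : ℝ) (hd : 0 < d) (hd2 : d ≤ 2) (hc : 0 ≤ c) (hcx : c ^ 2 ≤ x)
    (hx : x < (2 - Real.sqrt 3) ^ 2 * d ^ 4 / 2) :
    4 * x < (d - c) ^ 2 * (1 + x) ∧ c < d := by
  have s2 : Real.sqrt 3 ^ 2 = 3 := Real.sq_sqrt (by norm_num)
  have slb : (1.732 : ℝ) < Real.sqrt 3 := by
    rw [show (1.732:ℝ) = Real.sqrt (1.732^2) by rw [Real.sqrt_sq]; norm_num]
    exact Real.sqrt_lt_sqrt (by norm_num) (by norm_num)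
  have hd4 : 0 < d ^ 4 := by positivity
  have hx0 : 0 ≤ x := le_trans (sq_nonneg c) hcx
  have hS : x < 0.036 * d ^ 4 := by nlinarith
  have hc2 : c ^ 2 ≤ 0.036 * d ^ 4 := le_of_lt (lt_of_le_of_lt hcx hS)
  have key := key_poly d c hd hd2 hc hc2
  have hcd : c < d := by nlinarith [mul_nonneg (mul_nonneg (mul_nonneg hd.le hd.le) (sub_nonneg.2 hd2)) (by linarith : (0:ℝ) ≤ d + 2), mul_pos hd hd]
  refine ⟨?_, hcd⟩
  rcases le_or_gt ((d - c) ^ 2) 4 with h4 | h4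
  · nlinarith [mul_nonneg (sub_nonneg.2 h4) (sub_nonneg.2 hS.le)]
  · nlinarith [mul_nonneg hx0 (sub_nonneg.2 h4.le)]
open Finset
open scoped Classical

lemma jensen_log {U : Type*} (t : Finset U) (w f : U → ℝ)
    (h₀ : ∀ u ∈ t, 0 ≤ w u) (h₁ : ∑ u ∈ t, w u = 1) (hf : ∀ u ∈ t, 0 < f u) :
    ∑ u ∈ t, w u * Real.log (f u) ≤ Real.log (∑ u ∈ t, w u * f u) := by
  simpa [smul_eq_mul] using
    strictConcaveOn_log_Ioi.concaveOn.le_map_sum h₀ h₁ (fun u hu => hf u hu)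

lemma det_core {U : Type*} [Fintype U] (p q w : U → ℝ)
    (hp0 : ∀ u, 0 ≤ p u) (hq0 : ∀ u, 0 ≤ q u) (hw0 : ∀ u, 0 ≤ w u)
    (hp1 : ∑ u, p u = 1) (hq1 : ∑ u, q u = 1) (hw1 : ∑ u, w u = 1)
    (hwp : ∀ u, 0 < w u → 0 < p u) (hwq : ∀ u, 0 < w u → 0 < q u)
    (d : ℝ) (hd : 0 < d) (hd2 : d ≤ 2) (hdq : d ≤ ∑ u, |p u - q u|)
    (hchi : ∑ u ∈ univ.filter (fun u => 0 < p u), (w u - p u) ^ 2 / p u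
        < (2 - Real.sqrt 3) ^ 2 * d ^ 4 / 2) :
    ∑ u ∈ univ.filter (fun u => 0 < w u), w u * Real.log (q u)
      < ∑ u ∈ univ.filter (fun u => 0 < w u), w u * Real.log (p u) := by
  set S : Finset U := univ.filter (fun u => 0 < p u) with hS
  set T : Finset U := univ.filter (fun u => 0 < w u) with hT
  have hTS : T ⊆ S := by
    intro u hu
    simp only [hT, hS, mem_filter, mem_univ, true_and] at *
    exact hwp u hu
  have hTmem : ∀ u ∈ T, 0 < w u := fun u hu => (mem_filter.1 hu).2
  have hSmem : ∀ u ∈ S, 0 < p u := fun u hu => (mem_filter.1 hu).2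
  have wz : ∀ u, u ∉ T → w u = 0 := by
    intro u hu
    have : ¬ 0 < w u := by simpa [hT] using hu
    linarith [hw0 u]
  have pz : ∀ u, u ∉ S → p u = 0 := by
    intro u hu
    have : ¬ 0 < p u := by simpa [hS] using hu
    linarith [hp0 u]
  have hwT : ∑ u ∈ T, w u = 1 := by
    rw [← hw1]; exact Finset.sum_subset (subset_univ T) (fun u _ hu => wz u hu)
  have hwS : ∑ u ∈ S, w u = 1 := by
    rw [← hw1]; exact Finset.sum_subset (subset_univ S)
      (fun u _ hu => wz u (fun h => hu (hTS h)))
  have hpS : ∑ u ∈ S, p u = 1 := by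
    rw [← hp1]; exact Finset.sum_subset (subset_univ S) (fun u _ hu => pz u hu)
  set x : ℝ := ∑ u ∈ S, (w u - p u) ^ 2 / p u with hxdef
  have hx0 : 0 ≤ x := Finset.sum_nonneg fun u hu =>
    div_nonneg (sq_nonneg _) (hSmem u hu).le
  -- A1 : KL(w‖p) ≤ log (1+x)
  have hsum_wp : ∑ u ∈ T, w u * (w u / p u) = 1 + x := by
    have e1 : ∑ u ∈ T, w u * (w u / p u) = ∑ u ∈ S, w u * (w u / p u) :=
      Finset.sum_subset hTS (fun u _ hu => by rw [wz u hu]; ring)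
    have e2 : ∀ u ∈ S, (w u - p u) ^ 2 / p u = w u * (w u / p u) - 2 * w u + p u := by
      intro u hu
      have hp := hSmem u hu
      field_simp
      ring
    rw [e1, hxdef, Finset.sum_congr rfl e2, Finset.sum_add_distrib, Finset.sum_sub_distrib,
      ← Finset.mul_sum, hwS, hpS]
    ring
  have A1 : ∑ u ∈ T, w u * Real.log (w u / p u) ≤ Real.log (1 + x) := by
    have := jensen_log T w (fun u => w u / p u) (fun u hu => (hTmem u hu).le) hwT
      (fun u hu => div_pos (hTmem u hu) (hSmem u (hTS hu)))
    rwa [hsum_wp] at this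
  -- Bhattacharyya coefficient
  set BC : ℝ := ∑ u ∈ T, Real.sqrt (w u * q u) with hBC
  have hBCu : BC = ∑ u, Real.sqrt (w u * q u) :=
    Finset.sum_subset (subset_univ T) (fun u _ hu => by rw [wz u hu, zero_mul, Real.sqrt_zero])
  have hTne : T.Nonempty := by
    by_contra h
    rw [Finset.not_nonempty_iff_eq_empty] at h
    rw [h, Finset.sum_empty] at hwT
    norm_num at hwT
  have hBCpos : 0 < BC := by
    obtain ⟨u0, hu0⟩ := hTne
    refine Finset.sum_pos' (fun u _ => Real.sqrt_nonneg _) ⟨u0, hu0, ?_⟩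
    exact Real.sqrt_pos.2 (mul_pos (hTmem u0 hu0) (hwq u0 (hTmem u0 hu0)))
  -- A2 : ∑_T w log (q/w) ≤ log (BC^2)
  have A2 : ∑ u ∈ T, w u * Real.log (q u / w u) ≤ Real.log (BC ^ 2) := by
    have j := jensen_log T w (fun u => Real.sqrt (q u / w u)) (fun u hu => (hTmem u hu).le) hwT
      (fun u hu => Real.sqrt_pos.2 (div_pos (hwq u (hTmem u hu)) (hTmem u hu)))
    have e1 : ∀ u ∈ T, w u * Real.log (q u / w u)
        = 2 * (w u * Real.log (Real.sqrt (q u / w u))) := by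
      intro u hu
      rw [Real.log_sqrt (div_nonneg (hq0 u) (hw0 u))]
      ring
    have e2 : ∀ u ∈ T, w u * Real.sqrt (q u / w u) = Real.sqrt (w u * q u) := by
      intro u hu
      have hw := hTmem u hu
      rw [Real.sqrt_div (hq0 u), Real.sqrt_mul (hw0 u)]
      have e : w u * (Real.sqrt (q u) / Real.sqrt (w u))
          = Real.sqrt (q u) * (w u / Real.sqrt (w u)) := by ring
      rw [e, Real.div_sqrt, mul_comm]
    calc ∑ u ∈ T, w u * Real.log (q u / w u)
        = 2 * ∑ u ∈ T, w u * Real.log (Real.sqrt (q u / w u)) := by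
          rw [Finset.mul_sum]; exact Finset.sum_congr rfl e1
      _ ≤ 2 * Real.log (∑ u ∈ T, w u * Real.sqrt (q u / w u)) := by linarith [j]
      _ = 2 * Real.log BC := by rw [Finset.sum_congr rfl e2, ← hBC]
      _ = Real.log (BC ^ 2) := by rw [Real.log_pow]; push_cast; ring
  -- A3 : BC^2 ≤ 1 - D^2/4
  set D : ℝ := ∑ u, |w u - q u| with hD
  have A3 : BC ^ 2 ≤ 1 - D ^ 2 / 4 := by
    have cs := Finset.sum_mul_sq_le_sq_mul_sq Finset.univ
      (fun u => |Real.sqrt (w u) - Real.sqrt (q u)|)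
      (fun u => Real.sqrt (w u) + Real.sqrt (q u))
    have e1 : ∀ u : U, |Real.sqrt (w u) - Real.sqrt (q u)| * (Real.sqrt (w u) + Real.sqrt (q u))
        = |w u - q u| := by
      intro u
      rw [← abs_of_nonneg (by positivity : 0 ≤ Real.sqrt (w u) + Real.sqrt (q u)), ← abs_mul]
      congr 1
      have : (Real.sqrt (w u) - Real.sqrt (q u)) * (Real.sqrt (w u) + Real.sqrt (q u))
          = Real.sqrt (w u) ^ 2 - Real.sqrt (q u) ^ 2 := by ring
      rw [this, Real.sq_sqrt (hw0 u), Real.sq_sqrt (hq0 u)]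
    have e2 : ∑ u, |Real.sqrt (w u) - Real.sqrt (q u)| ^ 2 = 2 - 2 * BC := by
      have : ∀ u : U, |Real.sqrt (w u) - Real.sqrt (q u)| ^ 2
          = w u + q u - 2 * Real.sqrt (w u * q u) := by
        intro u
        rw [sq_abs, Real.sqrt_mul (hw0 u)]
        have h1 := Real.sq_sqrt (hw0 u)
        have h2 := Real.sq_sqrt (hq0 u)
        nlinarith [Real.sqrt_nonneg (w u), Real.sqrt_nonneg (q u)]
      rw [Finset.sum_congr rfl (fun u _ => this u), Finset.sum_sub_distrib,
        Finset.sum_add_distrib, hw1, hq1, ← Finset.mul_sum, ← hBCu]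
      ring
    have e3 : ∑ u, (Real.sqrt (w u) + Real.sqrt (q u)) ^ 2 = 2 + 2 * BC := by
      have : ∀ u : U, (Real.sqrt (w u) + Real.sqrt (q u)) ^ 2
          = w u + q u + 2 * Real.sqrt (w u * q u) := by
        intro u
        rw [Real.sqrt_mul (hw0 u)]
        have h1 := Real.sq_sqrt (hw0 u)
        have h2 := Real.sq_sqrt (hq0 u)
        nlinarith [Real.sqrt_nonneg (w u), Real.sqrt_nonneg (q u)]
      rw [Finset.sum_congr rfl (fun u _ => this u), Finset.sum_add_distrib,
        Finset.sum_add_distrib, hw1, hq1, ← Finset.mul_sum, ← hBCu]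
      ring
    rw [Finset.sum_congr rfl (fun u _ => e1 u), e2, e3] at cs
    rw [← hD] at cs
    nlinarith [cs]
  -- A4 : d - C ≤ D
  set C : ℝ := ∑ u, |w u - p u| with hC
  have A4 : d - C ≤ D := by
    have : ∑ u, |p u - q u| ≤ C + D := by
      rw [hC, hD, ← Finset.sum_add_distrib]
      refine Finset.sum_le_sum fun u _ => ?_
      calc |p u - q u| ≤ |p u - w u| + |w u - q u| := abs_sub_le _ _ _
        _ = |w u - p u| + |w u - q u| := by rw [abs_sub_comm]
    linarith [hdq]
  -- A5 : C^2 ≤ x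
  have A5 : C ^ 2 ≤ x := by
    have hCS : C = ∑ u ∈ S, |w u - p u| := by
      rw [hC]
      refine (Finset.sum_subset (subset_univ S) ?_).symm
      intro u _ hu
      rw [pz u hu, wz u (fun h => hu (hTS h)), sub_zero, abs_zero]
    have cs := Finset.sum_mul_sq_le_sq_mul_sq S
      (fun u => |w u - p u| / Real.sqrt (p u)) (fun u => Real.sqrt (p u))
    have e1 : ∀ u ∈ S, |w u - p u| / Real.sqrt (p u) * Real.sqrt (p u) = |w u - p u| := by
      intro u hu
      exact div_mul_cancel₀ _ (ne_of_gt (Real.sqrt_pos.2 (hSmem u hu)))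
    have e2 : ∀ u ∈ S, (|w u - p u| / Real.sqrt (p u)) ^ 2 = (w u - p u) ^ 2 / p u := by
      intro u hu
      rw [div_pow, sq_abs, Real.sq_sqrt (hSmem u hu).le]
    have e3 : ∑ u ∈ S, Real.sqrt (p u) ^ 2 = 1 := by
      rw [Finset.sum_congr rfl (fun u hu => Real.sq_sqrt (hSmem u hu).le), hpS]
    rw [Finset.sum_congr rfl e1, Finset.sum_congr rfl e2, e3, mul_one, ← hCS, ← hxdef] at cs
    exact cs
  -- combine
  have hCnn : 0 ≤ C := Finset.sum_nonneg fun u _ => abs_nonneg _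
  obtain ⟨hpoly, hCd⟩ := core_poly d C x hd hd2 hCnn A5 hchi
  have hDnn : 0 ≤ D := Finset.sum_nonneg fun u _ => abs_nonneg _
  have hD2 : (d - C) ^ 2 ≤ D ^ 2 := by
    have : 0 ≤ d - C := by linarith
    nlinarith
  have hBClt : BC ^ 2 * (1 + x) < 1 := by nlinarith [sq_nonneg BC]
  have hlog : Real.log (BC ^ 2) + Real.log (1 + x) < 0 := by
    rw [← Real.log_mul (by positivity) (by positivity)]
    exact Real.log_neg (by positivity) hBClt
  -- split logs
  have split : ∀ u ∈ T, w u * Real.log (q u) - w u * Real.log (p u)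
      = w u * Real.log (q u / w u) + w u * Real.log (w u / p u) := by
    intro u hu
    have hw := hTmem u hu
    rw [Real.log_div (ne_of_gt (hwq u hw)) (ne_of_gt hw),
      Real.log_div (ne_of_gt hw) (ne_of_gt (hSmem u (hTS hu)))]
    ring
  have : ∑ u ∈ T, w u * Real.log (q u) - ∑ u ∈ T, w u * Real.log (p u)
      = ∑ u ∈ T, w u * Real.log (q u / w u) + ∑ u ∈ T, w u * Real.log (w u / p u) := by
    rw [← Finset.sum_sub_distrib, ← Finset.sum_add_distrib]
    exact Finset.sum_congr rfl split
  linarith [A1, A2, this, hlog]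

/-- **explicit sample bound for parametric MLE.**  Let `Ξ : B → U` be a
parametric random function (`B = {(a,θ) : a ∈ A, θ ∈ Θ a}`, with `A, U` finite and each
`Θ a` nonempty), given by distributions `P a θ` on `U`.  Fix `(a, θ)`, let
`U⁺ = {u : P a θ u > 0}`, and let `d > 0` be the number
`d_{(a,θ)} = inf_{b ≠ a, θ' ∈ Θ b} ∑_u |P a θ u - P b θ' u|` (expressed here as a
positive lower bound on all these variational distances).  If
`k ≥ c₁·|U⁺|/(ε·d⁴)` with `c₁ = 2/(2-√3)²`, then with probability at least `1 - ε` over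
`k` i.i.d. samples drawn from `P a θ` the likelihood of `(a,θ)` strictly exceeds that of
`(b,θ')` simultaneously for every `b ≠ a` and `θ' ∈ Θ b`; hence MLE returns `a` with
probability at least `1 - ε`. -/
theorem stmt10 {A U : Type*} [Fintype A] [Fintype U]
    (Θ : A → Type*) [∀ a, Nonempty (Θ a)]
    (P : (a : A) → Θ a → U → ℝ)
    (hP0 : ∀ a θ u, 0 ≤ P a θ u) (hP1 : ∀ a θ, ∑ u, P a θ u = 1)
    (a : A) (θ : Θ a) (d : ℝ) (hd : 0 < d)
    (hdle : ∀ b, b ≠ a → ∀ θ' : Θ b, d ≤ ∑ u, |P a θ u - P b θ' u|)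
    (ε : ℝ) (hε : 0 < ε) (k : ℕ)
    (hk : 2 / (2 - Real.sqrt 3) ^ 2 *
        ((Finset.univ.filter fun u : U => 0 < P a θ u).card : ℝ) / (ε * d ^ 4) ≤ k) :
    1 - ε ≤
      ∑ v ∈ Finset.univ.filter (fun v : Fin k → U =>
          ∀ b, b ≠ a → ∀ θ' : Θ b, ∏ i, P b θ' (v i) < ∏ i, P a θ (v i)),
        ∏ i, P a θ (v i) := by
  classical
  set p : U → ℝ := P a θ with hpdef
  set S : Finset U := univ.filter (fun u => 0 < p u) with hSdef
  have hp0 : ∀ u, 0 ≤ p u := hP0 a θ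
  have hp1 : ∑ u, p u = 1 := hP1 a θ
  have hsqrt3 : Real.sqrt 3 < 2 := by
    rw [show (2:ℝ) = Real.sqrt 4 by
      rw [show (4:ℝ) = 2^2 by norm_num, Real.sqrt_sq]; norm_num]
    exact Real.sqrt_lt_sqrt (by norm_num) (by norm_num)
  have h2s : 0 < (2 - Real.sqrt 3) ^ 2 := by nlinarith
  set s0 : ℝ := (2 - Real.sqrt 3) ^ 2 * d ^ 4 / 2 with hs0
  have hs0pos : 0 < s0 := by
    have hd4 : 0 < d ^ 4 := by positivity
    rw [hs0]; positivity
  set W : (Fin k → U) → ℝ := fun v => ∏ i, p (v i) with hWdef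
  have hW0 : ∀ v, 0 ≤ W v := fun v => Finset.prod_nonneg fun i _ => hp0 _
  have hWsum : ∑ v : Fin k → U, W v = 1 := by
    rw [hWdef]
    rw [sum_prod_eq k (fun _ => p)]
    rw [hp1]; simp
  -- S nonempty, k positive
  have hSne : S.Nonempty := by
    by_contra h
    rw [Finset.not_nonempty_iff_eq_empty] at h
    have hz : ∑ u, p u = 0 := Finset.sum_eq_zero fun u _ => by
      have h1 : u ∉ S := h ▸ Finset.notMem_empty u
      have h2 : ¬ 0 < p u := by simpa [hSdef] using h1
      linarith [hp0 u]
    rw [hp1] at hz; norm_num at hz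
  have hm1 : (1:ℝ) ≤ (S.card : ℝ) := by
    have := Finset.card_pos.2 hSne
    exact_mod_cast this
  have hkpos : 0 < (k:ℝ) := by
    rcases Nat.eq_zero_or_pos k with h0 | h
    · exfalso
      subst h0
      have hed : 0 < ε * d ^ 4 := by positivity
      have hpos : 0 < 2 / (2 - Real.sqrt 3) ^ 2 * (S.card : ℝ) / (ε * d ^ 4) := by
        apply div_pos _ hed
        apply mul_pos (by positivity) (by linarith)
      rw [hSdef] at hpos
      simp only [Nat.cast_zero] at hk
      linarith
    · exact_mod_cast h
  -- empirical counts and chi-square statistic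
  set X : U → (Fin k → U) → ℝ := fun u v => ∑ i, (if v i = u then (1:ℝ) else 0) with hXdef
  have hX0 : ∀ u v, 0 ≤ X u v := fun u v =>
    Finset.sum_nonneg fun i _ => by positivity
  set Err : (Fin k → U) → ℝ := fun v => ∑ u ∈ S, (X u v / k - p u) ^ 2 / p u with hErrdef
  have hErr0 : ∀ v, 0 ≤ Err v := fun v =>
    Finset.sum_nonneg fun u hu => div_nonneg (sq_nonneg _) (mem_filter.1 hu).2.le
  have hEErr : ∑ v : Fin k → U, W v * Err v ≤ (S.card : ℝ) / k := by
    have swap : ∑ v : Fin k → U, W v * Err v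
        = ∑ u ∈ S, ∑ v : Fin k → U, W v * ((X u v / k - p u) ^ 2 / p u) := by
      rw [hErrdef]
      simp_rw [Finset.mul_sum]
      exact Finset.sum_comm
    rw [swap]
    have term : ∀ u ∈ S, ∑ v : Fin k → U, W v * ((X u v / k - p u) ^ 2 / p u)
        = (1 - p u) / k := by
      intro u hu
      have hpu : 0 < p u := (mem_filter.1 hu).2
      have e : ∀ v : Fin k → U, W v * ((X u v / k - p u) ^ 2 / p u)
          = (W v * (X u v - (k:ℝ) * p u) ^ 2) * (1 / ((k:ℝ) ^ 2 * p u)) := by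
        intro v
        have h1 : (X u v / k - p u) ^ 2 = (X u v - (k:ℝ) * p u) ^ 2 / (k:ℝ) ^ 2 := by
          field_simp
        rw [h1]
        field_simp
      rw [Finset.sum_congr rfl fun v _ => e v, ← Finset.sum_mul]
      rw [show ∑ v : Fin k → U, W v * (X u v - (k:ℝ) * p u) ^ 2
          = (k:ℝ) * (p u - p u ^ 2) from var_lemma k p hp1 u]
      field_simp
    rw [Finset.sum_congr rfl term]
    calc ∑ u ∈ S, (1 - p u) / k ≤ ∑ u ∈ S, 1 / (k:ℝ) := by
          refine Finset.sum_le_sum fun u hu => ?_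
          have h1 : 1 - p u ≤ 1 := by linarith [hp0 u]
          gcongr
      _ = (S.card : ℝ) / k := by
          rw [Finset.sum_const, nsmul_eq_mul]
          ring
  -- Markov's inequality
  set Bad : Finset (Fin k → U) := univ.filter (fun v => s0 ≤ Err v) with hBadDef
  have hBad : ∑ v ∈ Bad, W v ≤ ε := by
    have h1 : s0 * ∑ v ∈ Bad, W v ≤ ∑ v ∈ Bad, W v * Err v := by
      rw [Finset.mul_sum]
      refine Finset.sum_le_sum fun v hv => ?_
      have hve : s0 ≤ Err v := (mem_filter.1 hv).2
      nlinarith [hW0 v]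
    have h2 : ∑ v ∈ Bad, W v * Err v ≤ ∑ v : Fin k → U, W v * Err v :=
      Finset.sum_le_sum_of_subset_of_nonneg (subset_univ _)
        (fun v _ _ => mul_nonneg (hW0 v) (hErr0 v))
    have h3 : (S.card : ℝ) / k ≤ ε * s0 := by
      rw [div_le_iff₀ (by positivity : (0:ℝ) < ε * d ^ 4)] at hk
      rw [div_le_iff₀ hkpos]
      have e1 : (S.card : ℝ) = (2 / (2 - Real.sqrt 3) ^ 2 * (S.card : ℝ)) *
          ((2 - Real.sqrt 3) ^ 2 / 2) := by
        field_simp [(sub_pos.2 hsqrt3).ne']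
      rw [hSdef] at e1 ⊢
      rw [e1, hs0]
      calc (2 / (2 - Real.sqrt 3) ^ 2 * ((univ.filter fun u => 0 < p u).card : ℝ)) *
            ((2 - Real.sqrt 3) ^ 2 / 2)
          ≤ ((k:ℝ) * (ε * d ^ 4)) * ((2 - Real.sqrt 3) ^ 2 / 2) := by
            refine mul_le_mul_of_nonneg_right hk (by positivity)
        _ = ε * ((2 - Real.sqrt 3) ^ 2 * d ^ 4 / 2) * (k:ℝ) := by ring
    have h4 : s0 * ∑ v ∈ Bad, W v ≤ ε * s0 := le_trans h1 (le_trans h2 (le_trans hEErr h3))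
    nlinarith [hs0pos]
  -- the good event implies correct MLE
  have hGoodSub : ∀ v : Fin k → U, ¬ s0 ≤ Err v → W v ≠ 0 →
      ∀ b, b ≠ a → ∀ θ' : Θ b, ∏ i, P b θ' (v i) < ∏ i, p (v i) := by
    intro v hvErr hvW b hb θ'
    have hWv : 0 < W v := lt_of_le_of_ne (hW0 v) (Ne.symm hvW)
    have hpvi : ∀ i, 0 < p (v i) := by
      intro i
      rcases (hp0 (v i)).lt_or_eq with h | h
      · exact h
      · exfalso
        exact hvW (Finset.prod_eq_zero (mem_univ i) h.symm)
    set q : U → ℝ := P b θ' with hqdef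
    have hq0 : ∀ u, 0 ≤ q u := hP0 b θ'
    have hq1 : ∑ u, q u = 1 := hP1 b θ'
    have hd2 : d ≤ 2 := by
      refine le_trans (hdle b hb θ') ?_
      calc ∑ u, |p u - q u| ≤ ∑ u, (p u + q u) := by
            refine Finset.sum_le_sum fun u _ => ?_
            calc |p u - q u| ≤ |p u| + |q u| := abs_sub _ _
              _ = p u + q u := by rw [abs_of_nonneg (hp0 u), abs_of_nonneg (hq0 u)]
        _ = 2 := by rw [Finset.sum_add_distrib, hp1, hq1]; norm_num
    set w : U → ℝ := fun u => X u v / k with hwdef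
    have hw0 : ∀ u, 0 ≤ w u := fun u => div_nonneg (hX0 u v) hkpos.le
    have hXsum : ∑ u, X u v = k := by
      rw [hXdef]
      rw [Finset.sum_comm]
      simp [Finset.sum_ite_eq]
    have hw1 : ∑ u, w u = 1 := by
      rw [hwdef]
      rw [← Finset.sum_div, hXsum]
      field_simp
    have hwex : ∀ u, 0 < w u → ∃ i, v i = u := by
      intro u hu
      have hXu : X u v ≠ 0 := by
        intro h
        rw [hwdef] at hu
        simp only [h, zero_div] at hu
        exact lt_irrefl 0 hu
      rw [hXdef] at hXu
      obtain ⟨i, _, hi⟩ := Finset.exists_ne_zero_of_sum_ne_zero hXu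
      refine ⟨i, ?_⟩
      by_contra h
      rw [if_neg h] at hi
      exact hi rfl
    have hwp : ∀ u, 0 < w u → 0 < p u := by
      intro u hu
      obtain ⟨i, hi⟩ := hwex u hu
      exact hi ▸ hpvi i
    by_cases hqv : ∃ i, q (v i) = 0
    · obtain ⟨i, hi⟩ := hqv
      calc ∏ i, P b θ' (v i) = 0 := Finset.prod_eq_zero (mem_univ i) hi
        _ < ∏ i, p (v i) := hWv
    · push_neg at hqv
      have hqvi : ∀ i, 0 < q (v i) := fun i => (hq0 _).lt_of_ne (Ne.symm (hqv i))
      have hwq : ∀ u, 0 < w u → 0 < q u := by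
        intro u hu
        obtain ⟨i, hi⟩ := hwex u hu
        exact hi ▸ hqvi i
      have hchi : ∑ u ∈ univ.filter (fun u => 0 < p u), (w u - p u) ^ 2 / p u < s0 := by
        push_neg at hvErr
        calc ∑ u ∈ univ.filter (fun u => 0 < p u), (w u - p u) ^ 2 / p u
            = Err v := by rw [hErrdef, hSdef]
          _ < s0 := hvErr
      have hdet := det_core p q w hp0 hq0 hw0 hp1 hq1 hw1 hwp hwq d hd hd2
        (hdle b hb θ') hchi
      -- convert weighted log sums to products
      have conv : ∀ F : U → ℝ, ∑ i, F (v i) = ∑ u, X u v * F u := by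
        intro F
        have e1 : ∀ i, F (v i) = ∑ u, (if v i = u then F u else 0) := by
          intro i
          rw [Finset.sum_ite_eq]
          simp
        rw [Finset.sum_congr rfl fun i _ => e1 i, Finset.sum_comm]
        refine Finset.sum_congr rfl fun u _ => ?_
        rw [hXdef]
        rw [Finset.sum_mul]
        refine Finset.sum_congr rfl fun i _ => ?_
        by_cases h : v i = u <;> simp [h]
      have restr : ∀ F : U → ℝ, ∑ u, X u v * F u
          = k * ∑ u ∈ univ.filter (fun u => 0 < w u), w u * F u := by
        intro F
        rw [Finset.mul_sum]
        rw [← Finset.sum_subset (Finset.subset_univ (univ.filter (fun u => 0 < w u)))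
          (fun u _ hu => ?_)]
        · refine Finset.sum_congr rfl fun u _ => ?_
          rw [hwdef]
          field_simp
        · have hwu : ¬ 0 < w u := by simpa using hu
          have : w u = 0 := le_antisymm (not_lt.1 hwu) (hw0 u)
          have hX : X u v = 0 := by
            have := this
            rw [hwdef] at this
            field_simp at this
            simpa using this
          rw [hX, zero_mul]
      have key : ∑ i, Real.log (q (v i)) < ∑ i, Real.log (p (v i)) := by
        rw [conv (fun u => Real.log (q u)), conv (fun u => Real.log (p u)),
          restr (fun u => Real.log (q u)), restr (fun u => Real.log (p u))]
        exact mul_lt_mul_of_pos_left hdet hkpos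
      have h1 : Real.log (∏ i, q (v i)) < Real.log (∏ i, p (v i)) := by
        rw [Real.log_prod (fun i _ => ne_of_gt (hqvi i)),
          Real.log_prod (fun i _ => ne_of_gt (hpvi i))]
        exact key
      have hqpos : 0 < ∏ i, q (v i) := Finset.prod_pos fun i _ => hqvi i
      have hppos : 0 < ∏ i, p (v i) := Finset.prod_pos fun i _ => hpvi i
      exact (Real.log_lt_log_iff hqpos hppos).1 h1
  -- final assembly
  have hsplit : ∑ v ∈ Bad, W v + ∑ v ∈ univ.filter (fun v => ¬ s0 ≤ Err v), W v = 1 := by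
    rw [hBadDef, Finset.sum_filter_add_sum_filter_not, hWsum]
  have hGood : ∑ v ∈ univ.filter (fun v => ¬ s0 ≤ Err v), W v
      ≤ ∑ v ∈ Finset.univ.filter (fun v : Fin k → U =>
          ∀ b, b ≠ a → ∀ θ' : Θ b, ∏ i, P b θ' (v i) < ∏ i, p (v i)), W v := by
    rw [← Finset.sum_filter_ne_zero (univ.filter (fun v => ¬ s0 ≤ Err v))]
    refine Finset.sum_le_sum_of_subset_of_nonneg ?_ (fun v _ _ => hW0 v)
    intro v hv
    rw [Finset.filter_filter, Finset.mem_filter] at hv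
    rw [Finset.mem_filter]
    exact ⟨Finset.mem_univ v, hGoodSub v hv.2.1 hv.2.2⟩
  calc 1 - ε ≤ ∑ v ∈ univ.filter (fun v : Fin k → U => ¬ s0 ≤ Err v), W v := by
        linarith
    _ ≤ _ := hGood
end

section
/- Let p and q be probability distributions on a finite set U, and let α, β ≥ 0. Then Σ_{u∈U} |α·p_u − β·q_u| ≥ (1/2)·min(α, β)·Σ_{u∈U} |p_u − q_u|. -/
open Finset

lemma stmt14_aux {U : Type*} [Fintype U]
    (p q : U → ℝ) (hq0 : ∀ u, 0 ≤ q u) (hp1 : ∑ u, p u = 1)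
    (hq1 : ∑ u, q u = 1)
    (α β : ℝ) (hα : 0 ≤ α) (hαβ : α ≤ β) :
    1 / 2 * α * ∑ u, |p u - q u| ≤ ∑ u, |α * p u - β * q u| := by
  have hsum : ∑ u, (α * p u - β * q u) = α - β := by
    rw [Finset.sum_sub_distrib, ← Finset.mul_sum, ← Finset.mul_sum, hp1, hq1]
    ring
  have hA : β - α ≤ ∑ u, |α * p u - β * q u| := by
    calc β - α = |α - β| := by rw [abs_sub_comm]; exact (abs_of_nonneg (by linarith)).symm
    _ = |∑ u, (α * p u - β * q u)| := by rw [hsum]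
    _ ≤ ∑ u, |α * p u - β * q u| := Finset.abs_sum_le_sum_abs _ _
  have hB : α * ∑ u, |p u - q u| ≤ (∑ u, |α * p u - β * q u|) + (β - α) := by
    have : ∀ u, α * |p u - q u| ≤ |α * p u - β * q u| + (β - α) * q u := by
      intro u
      have h1 : α * (p u - q u) = (α * p u - β * q u) + (β - α) * q u := by ring
      calc α * |p u - q u| = |α * (p u - q u)| := by
            rw [abs_mul, abs_of_nonneg hα]
        _ = |(α * p u - β * q u) + (β - α) * q u| := by rw [h1]
        _ ≤ |α * p u - β * q u| + |(β - α) * q u| := abs_add_le _ _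
        _ = |α * p u - β * q u| + (β - α) * q u := by
            rw [abs_of_nonneg (mul_nonneg (by linarith) (hq0 u))]
    calc α * ∑ u, |p u - q u| = ∑ u, α * |p u - q u| := by rw [Finset.mul_sum]
      _ ≤ ∑ u, (|α * p u - β * q u| + (β - α) * q u) := Finset.sum_le_sum fun u _ => this u
      _ = (∑ u, |α * p u - β * q u|) + (β - α) := by
          rw [Finset.sum_add_distrib, ← Finset.mul_sum, hq1, mul_one]
  linarith

/-- For probability distributions `p, q` on a finite set `U` and
nonnegative reals `α, β`:  `∑_u |α·p_u - β·q_u| ≥ (1/2)·min(α,β)·∑_u |p_u - q_u|`. -/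
theorem stmt14 {U : Type*} [Fintype U]
    (p q : U → ℝ) (hp0 : ∀ u, 0 ≤ p u) (hp1 : ∑ u, p u = 1)
    (hq0 : ∀ u, 0 ≤ q u) (hq1 : ∑ u, q u = 1)
    (α β : ℝ) (hα : 0 ≤ α) (hβ : 0 ≤ β) :
    1 / 2 * min α β * ∑ u, |p u - q u| ≤ ∑ u, |α * p u - β * q u| := by
  rcases le_total α β with h | h
  · rw [min_eq_left h]
    exact stmt14_aux p q hq0 hp1 hq1 α β hα h
  · rw [min_eq_right h]
    have := stmt14_aux q p hp0 hq1 hp1 β α hβ h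
    calc 1 / 2 * β * ∑ u, |p u - q u| = 1 / 2 * β * ∑ u, |q u - p u| := by
          simp_rw [abs_sub_comm (p _)]
      _ ≤ ∑ u, |β * q u - α * p u| := this
      _ = ∑ u, |α * p u - β * q u| := by simp_rw [abs_sub_comm (β * q _)]
end

section
/- Let Ξ: A → U be a random function between finite sets, fix a ∈ A, let U⁺ = {u : P[ξ_a = u] > 0}, and let d_a = min_{b ≠ a} d(a,b), assumed strictly positive. Let c₁ = 2/(2 − √3)² and let ε > 0. If k ≥ c₁·|U⁺| / (ε·d_a⁴), then with probability at least 1 − ε over k i.i.d. samples (u_1, …, u_k) drawn from the distribution of ξ_a, the strict inequality Π_{i=1}^k P[ξ_a = u_i] > Π_{i=1}^k P[ξ_b = u_i] holds simultaneously for every b ≠ a; consequently maximum likelihood estimation correctly returns a with probability at least 1 − ε. -/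
open Finset
open scoped Classical

section AuxStmt18

variable {U : Type*} [Fintype U]

private lemma stmt18_swap (k : ℕ) (g : Fin k → U → ℝ) :
    ∑ v : Fin k → U, ∏ i, g i (v i) = ∏ i, ∑ w, g i w :=
  (Fintype.prod_sum g).symm

/-- Factorization: expectation of a product of indicators over i.i.d. samples. -/
private lemma stmt18_fact (k : ℕ) (p : U → ℝ) (hp1 : ∑ u, p u = 1) (u : U)
    (I : Finset (Fin k)) :
    ∑ v : Fin k → U, (∏ i, p (v i)) * (∏ i ∈ I, (if v i = u then (1:ℝ) else 0))
      = p u ^ I.card := by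
  classical
  have key : ∀ v : Fin k → U,
      (∏ i, p (v i)) * (∏ i ∈ I, (if v i = u then (1:ℝ) else 0))
        = ∏ i, (fun i w => p w * (if i ∈ I then (if w = u then (1:ℝ) else 0) else 1)) i (v i) := by
    intro v
    rw [Finset.prod_mul_distrib, Fintype.prod_ite_mem]
  have h2 := stmt18_swap k (fun i w => p w * (if i ∈ I then (if w = u then (1:ℝ) else 0) else 1))
  rw [Finset.sum_congr rfl fun v _ => key v, h2]
  have : ∀ i : Fin k, ∑ w, (p w * (if i ∈ I then (if w = u then (1:ℝ) else 0) else 1))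
      = (if i ∈ I then p u else 1) := by
    intro i
    by_cases hi : i ∈ I
    · simp [hi]
    · simp [hi, hp1]
  rw [Finset.prod_congr rfl fun i _ => this i, Fintype.prod_ite_mem, Finset.prod_const]

end AuxStmt18

section AuxStmt18b

variable {U : Type*} [Fintype U]

private lemma stmt18_M0 (k : ℕ) (p : U → ℝ) (hp1 : ∑ u, p u = 1) :
    ∑ v : Fin k → U, ∏ i, p (v i) = 1 := by
  have h := stmt18_swap k (fun _ w => p w)
  simpa [hp1] using h

private lemma stmt18_cnt (k : ℕ) (v : Fin k → U) (u : U) :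
    (((univ.filter fun i => v i = u).card : ℕ) : ℝ) = ∑ i, (if v i = u then (1:ℝ) else 0) := by
  classical
  rw [Finset.card_filter]
  push_cast
  exact Finset.sum_congr rfl fun i _ => by split <;> norm_num

private lemma stmt18_M1 (k : ℕ) (p : U → ℝ) (hp1 : ∑ u, p u = 1) (u : U) :
    ∑ v : Fin k → U, (∏ i, p (v i)) * (((univ.filter fun i => v i = u).card : ℕ) : ℝ)
      = k * p u := by
  classical
  have h : ∀ v : Fin k → U, (∏ i, p (v i)) * (((univ.filter fun i => v i = u).card : ℕ) : ℝ)
      = ∑ i, (∏ l, p (v l)) * (∏ l ∈ ({i} : Finset (Fin k)), (if v l = u then (1:ℝ) else 0)) := by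
    intro v
    rw [stmt18_cnt, Finset.mul_sum]
    exact Finset.sum_congr rfl fun i _ => by rw [Finset.prod_singleton]
  rw [Finset.sum_congr rfl fun v _ => h v, Finset.sum_comm]
  rw [Finset.sum_congr rfl fun i _ => stmt18_fact k p hp1 u {i}]
  simp

private lemma stmt18_M2 (k : ℕ) (p : U → ℝ) (hp1 : ∑ u, p u = 1) (u : U) :
    ∑ v : Fin k → U, (∏ i, p (v i)) * (((univ.filter fun i => v i = u).card : ℕ) : ℝ)^2
      = k * p u + ((k:ℝ)^2 - k) * (p u)^2 := by
  classical
  have h : ∀ v : Fin k → U, (∏ i, p (v i)) * (((univ.filter fun i => v i = u).card : ℕ) : ℝ)^2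
      = ∑ i, ∑ j, (∏ l, p (v l)) * (∏ l ∈ ({i, j} : Finset (Fin k)), (if v l = u then (1:ℝ) else 0)) := by
    intro v
    rw [stmt18_cnt, pow_two]
    rw [Finset.sum_mul_sum univ univ (fun i => if v i = u then (1:ℝ) else 0) (fun j => if v j = u then (1:ℝ) else 0)]
    rw [Finset.mul_sum]
    refine Finset.sum_congr rfl fun i _ => ?_
    rw [Finset.mul_sum]
    refine Finset.sum_congr rfl fun j _ => ?_
    by_cases hij : i = j
    · subst hij
      rw [Finset.pair_eq_singleton, Finset.prod_singleton]
      congr 1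
      split <;> norm_num
    · rw [Finset.prod_pair hij]
  rw [Finset.sum_congr rfl fun v _ => h v, Finset.sum_comm]
  have h2 : ∀ i : Fin k, ∑ v : Fin k → U, ∑ j, (∏ l, p (v l)) * (∏ l ∈ ({i, j} : Finset (Fin k)), (if v l = u then (1:ℝ) else 0))
      = ∑ j, ((p u)^2 + if j = i then p u - (p u)^2 else 0) := by
    intro i
    rw [Finset.sum_comm]
    refine Finset.sum_congr rfl fun j _ => ?_
    rw [stmt18_fact k p hp1 u {i,j}]
    by_cases hij : j = i
    · subst hij
      rw [Finset.pair_eq_singleton, Finset.card_singleton]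
      simp
    · have hij' : i ≠ j := fun h => hij h.symm
      rw [Finset.card_pair hij', if_neg hij]
      ring
  rw [Finset.sum_congr rfl fun i _ => h2 i]
  have h3 : ∀ i : Fin k, ∑ j, ((p u)^2 + if j = i then p u - (p u)^2 else 0)
      = k * (p u)^2 + (p u - (p u)^2) := by
    intro i
    rw [Finset.sum_add_distrib, Finset.sum_const, Finset.sum_ite_eq' univ i (fun _ => p u - (p u)^2)]
    simp [mul_comm]
  rw [Finset.sum_congr rfl fun i _ => h3 i, Finset.sum_const]
  simp only [Finset.card_univ, Fintype.card_fin, nsmul_eq_mul]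
  ring

end AuxStmt18b

section AuxStmt18c

variable {U : Type*} [Fintype U]

private lemma stmt18_var (k : ℕ) (hk : k ≠ 0) (p : U → ℝ) (hp1 : ∑ u, p u = 1) (u : U) :
    ∑ v : Fin k → U, (∏ i, p (v i)) * ((((univ.filter fun i => v i = u).card : ℕ) : ℝ)/k - p u)^2
      = (p u - (p u)^2)/k := by
  have hk' : (k:ℝ) ≠ 0 := Nat.cast_ne_zero.mpr hk
  have expand : ∀ v : Fin k → U,
      (∏ i, p (v i)) * ((((univ.filter fun i => v i = u).card : ℕ) : ℝ)/k - p u)^2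
      = ((∏ i, p (v i)) * (((univ.filter fun i => v i = u).card : ℕ) : ℝ)^2)/(k:ℝ)^2
        - (2 * p u / k) * ((∏ i, p (v i)) * (((univ.filter fun i => v i = u).card : ℕ) : ℝ))
        + (p u)^2 * (∏ i, p (v i)) := by
    intro v
    field_simp
    ring
  rw [Finset.sum_congr rfl fun v _ => expand v]
  rw [Finset.sum_add_distrib, Finset.sum_sub_distrib, ← Finset.sum_div, ← Finset.mul_sum,
    ← Finset.mul_sum]
  rw [stmt18_M2 k p hp1 u, stmt18_M1 k p hp1 u, stmt18_M0 k p hp1]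
  field_simp
  ring

private lemma stmt18_exp (k : ℕ) (hk : k ≠ 0) (p : U → ℝ) (hp0 : ∀ u, 0 ≤ p u)
    (hp1 : ∑ u, p u = 1) :
    ∑ v : Fin k → U, (∏ i, p (v i)) *
        (∑ u ∈ univ.filter (fun u => 0 < p u),
          ((((univ.filter fun i => v i = u).card : ℕ) : ℝ)/k - p u)^2 / p u)
      = (((univ.filter (fun u : U => 0 < p u)).card : ℝ) - 1)/k := by
  classical
  have hk' : (k:ℝ) ≠ 0 := Nat.cast_ne_zero.mpr hk
  rw [Finset.sum_congr rfl fun (v : Fin k → U) _ => Finset.mul_sum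
    (univ.filter (fun u => 0 < p u))
    (fun u => ((((univ.filter fun i => v i = u).card : ℕ) : ℝ)/k - p u)^2 / p u)
    (∏ i, p (v i))]
  rw [Finset.sum_comm]
  have inner : ∀ u ∈ univ.filter (fun u : U => 0 < p u),
      ∑ v : Fin k → U, (∏ i, p (v i)) *
          (((((univ.filter fun i => v i = u).card : ℕ) : ℝ)/k - p u)^2 / p u)
        = (1 - p u)/k := by
    intro u hu
    have hpu : 0 < p u := (Finset.mem_filter.mp hu).2
    have h1 : ∀ v : Fin k → U, (∏ i, p (v i)) *
        (((((univ.filter fun i => v i = u).card : ℕ) : ℝ)/k - p u)^2 / p u)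
        = ((∏ i, p (v i)) * ((((univ.filter fun i => v i = u).card : ℕ) : ℝ)/k - p u)^2) / p u :=
      fun v => by ring
    rw [Finset.sum_congr rfl fun v _ => h1 v, ← Finset.sum_div, stmt18_var k hk p hp1 u]
    field_simp
  rw [Finset.sum_congr rfl inner]
  have hS1 : ∑ u ∈ univ.filter (fun u : U => 0 < p u), p u = 1 := by
    rw [← hp1]
    apply Finset.sum_subset (Finset.filter_subset _ _)
    intro u _ hu
    have : ¬ 0 < p u := fun h => hu (Finset.mem_filter.mpr ⟨Finset.mem_univ u, h⟩)
    linarith [hp0 u]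
  rw [← Finset.sum_div]
  rw [Finset.sum_sub_distrib, hS1, Finset.sum_const, nsmul_eq_mul, mul_one]

end AuxStmt18c

section AuxStmt18d

variable {U : Type*} [Fintype U]

set_option maxHeartbeats 1000000 in
private lemma stmt18_det (k : ℕ) (hk : k ≠ 0) (pa pb : U → ℝ)
    (hpa0 : ∀ u, 0 ≤ pa u) (hpb0 : ∀ u, 0 ≤ pb u)
    (hpa1 : ∑ u, pa u = 1) (hpb1 : ∑ u, pb u = 1)
    (da : ℝ) (hda : 0 < da) (hd : da ≤ ∑ u, |pa u - pb u|)
    (v : Fin k → U) (hv : ∀ i, 0 < pa (v i))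
    (hX : ∑ u ∈ univ.filter (fun u => 0 < pa u),
        ((((univ.filter fun i => v i = u).card : ℕ) : ℝ)/k - pa u)^2 / pa u
      < 1 - Real.sqrt (1 - da^2/4)) :
    ∏ i, pb (v i) < ∏ i, pa (v i) := by
  classical
  have hkpos : 0 < (k:ℝ) := by exact_mod_cast Nat.pos_of_ne_zero hk
  set S : Finset U := univ.filter (fun u => 0 < pa u) with hSdef
  have hSpa : ∀ u ∈ S, 0 < pa u := fun u hu => (Finset.mem_filter.mp hu).2
  have hSsum : ∑ u ∈ S, pa u = 1 := by
    rw [← hpa1]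
    apply Finset.sum_subset (Finset.filter_subset _ _)
    intro u _ hu
    have : ¬ 0 < pa u := fun h => hu (Finset.mem_filter.mpr ⟨Finset.mem_univ u, h⟩)
    linarith [hpa0 u]
  set q : U → ℝ := fun u => (((univ.filter fun i => v i = u).card : ℕ) : ℝ)/k with hqdef
  set y : U → ℝ := fun u => Real.sqrt (Real.sqrt (pb u / pa u)) with hydef
  have hy0 : ∀ u, 0 ≤ y u := fun u => Real.sqrt_nonneg _
  have hq0 : ∀ u, 0 ≤ q u := fun u => div_nonneg (Nat.cast_nonneg _) (Nat.cast_nonneg _)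
  have hmemS : ∀ i, v i ∈ S := fun i => Finset.mem_filter.mpr ⟨Finset.mem_univ _, hv i⟩
  set Xv : ℝ := ∑ u ∈ S, (q u - pa u)^2 / pa u with hXvdef
  have hX0 : 0 ≤ Xv := Finset.sum_nonneg fun u hu => div_nonneg (sq_nonneg _) (hSpa u hu).le
  have hqsum : ∑ u ∈ S, q u = 1 := by
    have h1 : ∑ u ∈ S, q u = (∑ u ∈ S, (((univ.filter fun i => v i = u).card : ℕ) : ℝ))/k := by
      rw [Finset.sum_div]
    have h2 : ∑ u ∈ S, (((univ.filter fun i => v i = u).card : ℕ) : ℝ) = k := by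
      rw [Finset.sum_congr rfl fun u _ => stmt18_cnt k v u, Finset.sum_comm]
      have h3 : ∀ i : Fin k, ∑ u ∈ S, (if v i = u then (1:ℝ) else 0) = 1 := by
        intro i
        rw [Finset.sum_ite_eq S (v i) (fun _ => (1:ℝ)), if_pos (hmemS i)]
      rw [Finset.sum_congr rfl fun i _ => h3 i]
      simp
    rw [h1, h2, div_self (ne_of_gt hkpos)]
  -- the Bhattacharyya-type quantities
  set B : ℝ := ∑ u ∈ S, Real.sqrt (pa u * pb u) with hBdef
  set C : ℝ := ∑ u ∈ S, pa u * y u with hCdef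
  set D : ℝ := ∑ u ∈ S, pa u * (y u - 1)^2 with hDdef
  set E : ℝ := ∑ u ∈ S, (q u - pa u) * (y u - 1) with hEdef
  have hB0 : 0 ≤ B := Finset.sum_nonneg fun u hu => Real.sqrt_nonneg _
  have hD0 : 0 ≤ D := Finset.sum_nonneg fun u hu =>
    mul_nonneg (hpa0 u) (sq_nonneg _)
  have hy2 : ∀ u ∈ S, pa u * (y u)^2 = Real.sqrt (pa u * pb u) := by
    intro u hu
    have hpu : 0 < pa u := hSpa u hu
    calc pa u * (y u)^2 = pa u * Real.sqrt (pb u / pa u) := by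
          rw [hydef, Real.sq_sqrt (Real.sqrt_nonneg _)]
      _ = Real.sqrt ((pa u)^2) * Real.sqrt (pb u / pa u) := by
          rw [Real.sqrt_sq hpu.le]
      _ = Real.sqrt ((pa u)^2 * (pb u / pa u)) := (Real.sqrt_mul (sq_nonneg _) _).symm
      _ = Real.sqrt (pa u * pb u) := by
          congr 1
          field_simp
  have hBeq : ∑ u ∈ S, pa u * (y u)^2 = B := Finset.sum_congr rfl hy2
  -- Bhattacharyya vs total variation
  have hB2 : B^2 ≤ 1 - da^2/4 := by
    have hBfull : B = ∑ u, Real.sqrt (pa u * pb u) := by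
      apply Finset.sum_subset (Finset.filter_subset _ _)
      intro u _ hu
      have : ¬ 0 < pa u := fun h => hu (Finset.mem_filter.mpr ⟨Finset.mem_univ u, h⟩)
      have : pa u = 0 := le_antisymm (not_lt.mp this) (hpa0 u)
      rw [this, zero_mul, Real.sqrt_zero]
    have hmin0 : ∀ u, 0 ≤ min (pa u) (pb u) := fun u => le_min (hpa0 u) (hpb0 u)
    have hmax0 : ∀ u, 0 ≤ max (pa u) (pb u) := fun u => le_trans (hpa0 u) (le_max_left _ _)
    have hsplit : ∀ u : U, Real.sqrt (pa u * pb u)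
        = Real.sqrt (min (pa u) (pb u)) * Real.sqrt (max (pa u) (pb u)) := by
      intro u
      rw [← Real.sqrt_mul (hmin0 u), min_mul_max]
    have hCS := Real.sum_sqrt_mul_sqrt_le univ (f := fun u => min (pa u) (pb u))
      (g := fun u => max (pa u) (pb u)) hmin0 hmax0
    have hBle : B ≤ Real.sqrt (∑ u, min (pa u) (pb u)) * Real.sqrt (∑ u, max (pa u) (pb u)) := by
      rw [hBfull, Finset.sum_congr rfl fun u _ => hsplit u]
      exact hCS
    have hm0 : 0 ≤ ∑ u, min (pa u) (pb u) := Finset.sum_nonneg fun u _ => hmin0 u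
    have hM0 : 0 ≤ ∑ u, max (pa u) (pb u) := Finset.sum_nonneg fun u _ => hmax0 u
    have hsum2 : (∑ u, min (pa u) (pb u)) + (∑ u, max (pa u) (pb u)) = 2 := by
      rw [← Finset.sum_add_distrib]
      have : ∀ u : U, min (pa u) (pb u) + max (pa u) (pb u) = pa u + pb u := fun u =>
        min_add_max _ _
      rw [Finset.sum_congr rfl fun u _ => this u, Finset.sum_add_distrib, hpa1, hpb1]
      norm_num
    have hdiff : (∑ u, max (pa u) (pb u)) - (∑ u, min (pa u) (pb u)) = ∑ u, |pa u - pb u| := by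
      rw [← Finset.sum_sub_distrib]
      refine Finset.sum_congr rfl fun u _ => ?_
      rw [max_sub_min_eq_abs, abs_sub_comm]
    have hsq : B^2 ≤ (∑ u, min (pa u) (pb u)) * (∑ u, max (pa u) (pb u)) := by
      have h1 : B^2 ≤ (Real.sqrt (∑ u, min (pa u) (pb u)) * Real.sqrt (∑ u, max (pa u) (pb u)))^2 :=
        pow_le_pow_left₀ hB0 hBle 2
      rwa [mul_pow, Real.sq_sqrt hm0, Real.sq_sqrt hM0] at h1
    have hdd : da ≤ (∑ u, max (pa u) (pb u)) - (∑ u, min (pa u) (pb u)) := by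
      rw [hdiff]; exact hd
    nlinarith [hsq, hsum2, hdd, hda]
  -- B ≤ √(1 - da²/4), hence Xv < 1 - B
  have harg0 : 0 ≤ 1 - da^2/4 := le_trans (sq_nonneg B) hB2
  have hBw : B ≤ Real.sqrt (1 - da^2/4) := (Real.le_sqrt hB0 harg0).mpr hB2
  have hXB : Xv < 1 - B := by linarith [hX, hBw]
  -- D = 1 + B - 2C
  have hD : D = 1 + B - 2*C := by
    have expand : ∀ u ∈ S, pa u * (y u - 1)^2
        = pa u * (y u)^2 - 2*(pa u * y u) + pa u := fun u _ => by ring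
    rw [hDdef, Finset.sum_congr rfl expand, Finset.sum_add_distrib, Finset.sum_sub_distrib,
      hBeq, ← Finset.mul_sum, ← hCdef, hSsum]
    ring
  -- t = C + E
  set t : ℝ := ∑ u ∈ S, q u * y u with htdef
  have ht0 : 0 ≤ t := Finset.sum_nonneg fun u _ => mul_nonneg (hq0 u) (hy0 u)
  have htCE : t = C + E := by
    have expand : ∀ u ∈ S, q u * y u
        = pa u * y u + (q u - pa u) * (y u - 1) + (q u - pa u) := fun u _ => by ring
    rw [htdef, Finset.sum_congr rfl expand, Finset.sum_add_distrib, Finset.sum_add_distrib,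
      Finset.sum_sub_distrib, hqsum, hSsum, ← hCdef, ← hEdef]
    ring
  -- Cauchy-Schwarz : E² ≤ Xv * D
  have hCS2 : E^2 ≤ Xv * D := by
    have h := Finset.sum_mul_sq_le_sq_mul_sq S
      (fun u => (q u - pa u)/Real.sqrt (pa u)) (fun u => Real.sqrt (pa u) * (y u - 1))
    have h1 : ∀ u ∈ S, (q u - pa u)/Real.sqrt (pa u) * (Real.sqrt (pa u) * (y u - 1))
        = (q u - pa u) * (y u - 1) := by
      intro u hu
      have hpu : 0 < Real.sqrt (pa u) := Real.sqrt_pos.mpr (hSpa u hu)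
      field_simp
    have h2 : ∀ u ∈ S, ((q u - pa u)/Real.sqrt (pa u))^2 = (q u - pa u)^2 / pa u := by
      intro u hu
      rw [div_pow, Real.sq_sqrt (hSpa u hu).le]
    have h3 : ∀ u ∈ S, (Real.sqrt (pa u) * (y u - 1))^2 = pa u * (y u - 1)^2 := by
      intro u hu
      rw [mul_pow, Real.sq_sqrt (hSpa u hu).le]
    rw [Finset.sum_congr rfl h1, Finset.sum_congr rfl h2, Finset.sum_congr rfl h3] at h
    exact h
  -- conclude t < 1
  have hC1 : 0 < 1 - C := by
    have h1 : 2 - 2*C = D + (1 - B) := by linarith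
    linarith
  have hE1 : E < 1 - C := by
    rcases eq_or_lt_of_le hD0 with h0 | hDpos
    · have hE2 : E^2 ≤ 0 := by rw [← h0] at hCS2; simpa using hCS2
      have : E = 0 := by nlinarith [sq_nonneg E]
      linarith
    · have h2 : E^2 < (1 - B)*D := by
        calc E^2 ≤ Xv * D := hCS2
          _ < (1-B) * D := by exact mul_lt_mul_of_pos_right hXB hDpos
      have h3 : (1-B)*D ≤ (1-C)^2 := by nlinarith [sq_nonneg (C - B)]
      nlinarith [hC1]
  have ht1 : t < 1 := by rw [htCE]; linarith
  -- AM-GM step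
  have hsumyv : ∑ i, y (v i) = ∑ u ∈ S, (((univ.filter fun i => v i = u).card : ℕ) : ℝ) * y u := by
    have h1 : ∀ i : Fin k, y (v i) = ∑ u ∈ S, (if v i = u then y u else 0) := by
      intro i
      rw [Finset.sum_ite_eq S (v i) y, if_pos (hmemS i)]
    rw [Finset.sum_congr rfl fun i _ => h1 i, Finset.sum_comm]
    refine Finset.sum_congr rfl fun u _ => ?_
    rw [stmt18_cnt k v u, Finset.sum_mul]
    refine Finset.sum_congr rfl fun i _ => ?_
    split <;> simp
  have htval : t = (∑ i, y (v i))/k := by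
    rw [hsumyv, htdef, Finset.sum_div]
    refine Finset.sum_congr rfl fun u _ => ?_
    rw [hqdef]
    ring
  have hprodt : ∏ i, y (v i) ≤ t ^ k := by
    have hw : ∀ i ∈ (univ : Finset (Fin k)), (0:ℝ) ≤ (k:ℝ)⁻¹ := fun i _ => by positivity
    have hw1 : ∑ _i : Fin k, (k:ℝ)⁻¹ = 1 := by
      rw [Finset.sum_const, Finset.card_univ, Fintype.card_fin, nsmul_eq_mul]
      field_simp
    have hz : ∀ i ∈ (univ : Finset (Fin k)), (0:ℝ) ≤ y (v i) := fun i _ => hy0 _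
    have hAM := Real.geom_mean_le_arith_mean_weighted univ
      (fun _ : Fin k => (k:ℝ)⁻¹) (fun i => y (v i)) hw hw1 hz
    have hL : ∏ i : Fin k, (y (v i)) ^ ((k:ℝ)⁻¹)
        = (∏ i, y (v i)) ^ ((k:ℝ)⁻¹) := Real.finset_prod_rpow univ _ (fun i _ => hy0 _) _
    have hR : ∑ i : Fin k, (k:ℝ)⁻¹ * y (v i) = t := by
      rw [← Finset.mul_sum, htval]
      ring
    rw [hL, hR] at hAM
    have hP0 : 0 ≤ ∏ i, y (v i) := Finset.prod_nonneg fun i _ => hy0 _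
    have hkey : ((∏ i, y (v i)) ^ ((k:ℝ)⁻¹)) ^ k ≤ t ^ k :=
      pow_le_pow_left₀ (Real.rpow_nonneg hP0 _) hAM k
    have hid : ((∏ i, y (v i)) ^ ((k:ℝ)⁻¹)) ^ k = ∏ i, y (v i) := by
      rw [← Real.rpow_natCast ((∏ i, y (v i)) ^ ((k:ℝ)⁻¹)) k, ← Real.rpow_mul hP0]
      rw [inv_mul_cancel₀ (ne_of_gt hkpos), Real.rpow_one]
    rwa [hid] at hkey
  -- rewrite pb in terms of pa and y
  have hx4 : ∀ i, pb (v i) = pa (v i) * (y (v i))^4 := by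
    intro i
    have hpv : 0 < pa (v i) := hv i
    have hdivnn : 0 ≤ pb (v i) / pa (v i) := div_nonneg (hpb0 _) hpv.le
    have hy4 : (y (v i))^4 = pb (v i) / pa (v i) := by
      have : (y (v i))^4 = ((y (v i))^2)^2 := by ring
      rw [this, hydef]
      rw [Real.sq_sqrt (Real.sqrt_nonneg _), Real.sq_sqrt hdivnn]
    rw [hy4]
    field_simp
  have hprodpa : 0 < ∏ i, pa (v i) := Finset.prod_pos fun i _ => hv i
  calc ∏ i, pb (v i) = (∏ i, pa (v i)) * (∏ i, y (v i))^4 := by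
        rw [Finset.prod_congr rfl fun i _ => hx4 i, Finset.prod_mul_distrib, Finset.prod_pow]
    _ ≤ (∏ i, pa (v i)) * (t^k)^4 := by
        have h1 : (∏ i, y (v i))^4 ≤ (t^k)^4 :=
          pow_le_pow_left₀ (Finset.prod_nonneg fun i _ => hy0 _) hprodt 4
        exact mul_le_mul_of_nonneg_left h1 hprodpa.le
    _ < (∏ i, pa (v i)) * 1 := by
        have htk : t^k < 1 := pow_lt_one₀ ht0 ht1 hk
        have h2 : (t^k)^4 < 1 := pow_lt_one₀ (pow_nonneg ht0 k) htk (by norm_num)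
        exact mul_lt_mul_of_pos_left h2 hprodpa
    _ = ∏ i, pa (v i) := mul_one _

end AuxStmt18d

private lemma stmt18_analytic (da : ℝ) (hda : 0 < da) (hda2 : da ≤ 2) :
    da^4 ≤ 2/(2 - Real.sqrt 3)^2 * (1 - Real.sqrt (1 - da^2/4)) := by
  set s := Real.sqrt 3 with hs
  have hs2 : s^2 = 3 := Real.sq_sqrt (by norm_num)
  have hs0 : 0 ≤ s := Real.sqrt_nonneg 3
  have hsu : s ≤ 97/56 := by nlinarith [sq_nonneg (4*s - 7)]
  have hsl : 168/97 ≤ s := by nlinarith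
  have h2s : 0 < (2 - s)^2 := by nlinarith
  set w := Real.sqrt (1 - da^2/4) with hw
  have harg : 0 ≤ 1 - da^2/4 := by nlinarith
  have hw2 : w^2 = 1 - da^2/4 := Real.sq_sqrt harg
  have hw0 : 0 ≤ w := Real.sqrt_nonneg _
  have hw1 : w ≤ 1 := by nlinarith
  have hkey : 8*((1-w)*(1+w)^2)*(7-4*s) ≤ 1 := by
    have h1 : (1-w)*(1+w)^2 ≤ 32/27 := by
      nlinarith [mul_nonneg (sq_nonneg (3*w-1)) (by linarith : (0:ℝ) ≤ 3*w+5)]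
    have h2 : (0:ℝ) ≤ 7-4*s := by linarith
    have h3 : 7-4*s ≤ 27/256 := by linarith
    nlinarith [mul_le_mul h1 h3 h2 (by norm_num : (0:ℝ) ≤ 32/27)]
  rw [div_mul_eq_mul_div, le_div_iff₀ h2s]
  have hda4 : da^2 = 4 - 4*w^2 := by linarith
  have hda4' : da^4 = (4 - 4*w^2)^2 := by rw [show da^4 = (da^2)^2 by ring, hda4]
  have hfin : 2*(1-w) * (8*((1-w)*(1+w)^2)*(7-4*s)) ≤ 2*(1-w) * 1 :=
    mul_le_mul_of_nonneg_left hkey (by linarith)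
  have hexp : (4-4*w^2)^2*(2-s)^2 = 2*(1-w) * (8*((1-w)*(1+w)^2)*(7-4*s)) := by
    linear_combination (16*(1-w)^2*(1+w)^2) * hs2
  calc da^4 * (2-s)^2 = (4-4*w^2)^2*(2-s)^2 := by rw [hda4']
    _ = 2*(1-w) * (8*((1-w)*(1+w)^2)*(7-4*s)) := hexp
    _ ≤ 2*(1-w) * 1 := hfin
    _ = 2*(1-w) := mul_one _

set_option maxHeartbeats 1000000 in
/-- **explicit sample bound for non-parametric MLE.**  Let `Ξ : A → U`
be a random function between finite sets, given by distributions `p a` on `U`.  Fix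
`a ∈ A`, let `U⁺ = {u : p a u > 0}`, and let `d_a > 0` be
`min_{b ≠ a} ∑_u |p a u - p b u|` (expressed here as a positive lower bound on all
these variational distances).  If `k ≥ c₁·|U⁺|/(ε·d_a⁴)` with `c₁ = 2/(2-√3)²`, then
with probability at least `1 - ε` over `k` i.i.d. samples drawn from `p a` the
likelihood of `a` strictly exceeds that of `b` simultaneously for every `b ≠ a`; hence
MLE returns `a` with probability at least `1 - ε`. -/
theorem stmt18 {A U : Type*} [Fintype A] [Fintype U] [Nonempty A] [Nonempty U]
    (p : A → U → ℝ) (hp0 : ∀ a u, 0 ≤ p a u) (hp1 : ∀ a, ∑ u, p a u = 1)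
    (a : A) (da : ℝ) (hda : 0 < da)
    (hdle : ∀ b, b ≠ a → da ≤ ∑ u, |p a u - p b u|)
    (ε : ℝ) (hε : 0 < ε) (k : ℕ)
    (hk : 2 / (2 - Real.sqrt 3) ^ 2 *
        ((Finset.univ.filter fun u : U => 0 < p a u).card : ℝ) / (ε * da ^ 4) ≤ k) :
    1 - ε ≤
      ∑ v ∈ Finset.univ.filter (fun v : Fin k → U =>
          ∀ b, b ≠ a → ∏ i, p b (v i) < ∏ i, p a (v i)),
        ∏ i, p a (v i) := by
  classical
  have hw0 : ∀ v : Fin k → U, 0 ≤ ∏ i, p a (v i) :=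
    fun v => Finset.prod_nonneg fun i _ => hp0 a (v i)
  have hsum0 : (0:ℝ) ≤ ∑ v ∈ Finset.univ.filter (fun v : Fin k → U =>
      ∀ b, b ≠ a → ∏ i, p b (v i) < ∏ i, p a (v i)), ∏ i, p a (v i) :=
    Finset.sum_nonneg fun v _ => hw0 v
  rcases le_or_gt 1 ε with hε1 | hε1
  · linarith
  by_cases hex : ∃ b : A, b ≠ a
  swap
  · push_neg at hex
    have hfil : (Finset.univ.filter (fun v : Fin k → U =>
        ∀ b, b ≠ a → ∏ i, p b (v i) < ∏ i, p a (v i))) = Finset.univ := by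
      apply Finset.filter_true_of_mem
      intro v _ b hb
      exact absurd (hex b) hb
    rw [hfil, stmt18_M0 k (p a) (hp1 a)]
    linarith
  obtain ⟨b₀, hb₀⟩ := hex
  -- basic positivity facts
  have hs2 : (Real.sqrt 3)^2 = 3 := Real.sq_sqrt (by norm_num)
  have hs0 : 0 ≤ Real.sqrt 3 := Real.sqrt_nonneg 3
  have hc1pos : 0 < 2/(2 - Real.sqrt 3)^2 := by
    apply div_pos (by norm_num)
    nlinarith [sq_nonneg (4*Real.sqrt 3 - 7)]
  have hda2 : da ≤ 2 := by
    have h1 := hdle b₀ hb₀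
    have h2 : ∑ u, |p a u - p b₀ u| ≤ 2 := by
      have h3 : ∀ u, |p a u - p b₀ u| ≤ p a u + p b₀ u := fun u => by
        rw [abs_sub_le_iff]
        constructor <;> nlinarith [hp0 a u, hp0 b₀ u]
      calc ∑ u, |p a u - p b₀ u| ≤ ∑ u, (p a u + p b₀ u) :=
            Finset.sum_le_sum fun u _ => h3 u
        _ = 2 := by rw [Finset.sum_add_distrib, hp1 a, hp1 b₀]; norm_num
    linarith
  have hm1 : 1 ≤ ((Finset.univ.filter fun u : U => 0 < p a u).card : ℝ) := by
    have hne : (Finset.univ.filter fun u : U => 0 < p a u).Nonempty := by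
      by_contra h
      rw [Finset.not_nonempty_iff_eq_empty] at h
      have : ∑ u, p a u = 0 := by
        apply Finset.sum_eq_zero
        intro u _
        by_contra h2
        have : 0 < p a u := lt_of_le_of_ne (hp0 a u) (Ne.symm h2)
        have : u ∈ Finset.univ.filter fun u : U => 0 < p a u :=
          Finset.mem_filter.mpr ⟨Finset.mem_univ _, this⟩
        simp [h] at this
      rw [hp1 a] at this
      norm_num at this
    have := Finset.card_pos.mpr hne
    exact_mod_cast this
  have hkpos : 0 < k := by
    by_contra h
    push_neg at h
    interval_cases k
    have hpos : 0 < 2 / (2 - Real.sqrt 3) ^ 2 *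
        ((Finset.univ.filter fun u : U => 0 < p a u).card : ℝ) / (ε * da ^ 4) := by
      apply div_pos (by positivity) (by positivity)
    simp only [Nat.cast_zero] at hk
    linarith
  have hk0 : k ≠ 0 := hkpos.ne'
  have hkR : 0 < (k:ℝ) := by exact_mod_cast hkpos
  set T : ℝ := 1 - Real.sqrt (1 - da^2/4) with hTdef
  have harg : 0 ≤ 1 - da^2/4 := by nlinarith
  have hTpos : 0 < T := by
    have h1 : Real.sqrt (1 - da^2/4) < Real.sqrt 1 :=
      Real.sqrt_lt_sqrt harg (by nlinarith)
    rw [Real.sqrt_one] at h1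
    simp only [hTdef]
    linarith
  have hL : da^4 ≤ 2/(2 - Real.sqrt 3)^2 * T := stmt18_analytic da hda hda2
  -- the good event
  set G : Finset (Fin k → U) := Finset.univ.filter (fun v : Fin k → U =>
      (∀ i, 0 < p a (v i)) ∧
      (∑ u ∈ Finset.univ.filter (fun u : U => 0 < p a u),
        ((((Finset.univ.filter fun i => v i = u).card : ℕ) : ℝ)/k - p a u)^2 / p a u) < T)
    with hGdef
  have hsub : G ⊆ Finset.univ.filter (fun v : Fin k → U =>
      ∀ b, b ≠ a → ∏ i, p b (v i) < ∏ i, p a (v i)) := by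
    intro v hvG
    rw [hGdef, Finset.mem_filter] at hvG
    obtain ⟨-, hvS, hvX⟩ := hvG
    refine Finset.mem_filter.mpr ⟨Finset.mem_univ _, fun b hb => ?_⟩
    exact stmt18_det k hk0 (p a) (p b) (hp0 a) (hp0 b) (hp1 a) (hp1 b) da hda
      (hdle b hb) v hvS hvX
  -- Markov bound for the bad event
  have hXnn : ∀ v : Fin k → U, 0 ≤ ∑ u ∈ Finset.univ.filter (fun u : U => 0 < p a u),
      ((((Finset.univ.filter fun i => v i = u).card : ℕ) : ℝ)/k - p a u)^2 / p a u :=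
    fun v => Finset.sum_nonneg fun u hu =>
      div_nonneg (sq_nonneg _) (Finset.mem_filter.mp hu).2.le
  have hbad : ∑ v ∈ Gᶜ, ∏ i, p a (v i) ≤ ε := by
    have hterm : ∀ v ∈ Gᶜ, ∏ i, p a (v i) ≤ (∏ i, p a (v i)) *
        ((∑ u ∈ Finset.univ.filter (fun u : U => 0 < p a u),
          ((((Finset.univ.filter fun i => v i = u).card : ℕ) : ℝ)/k - p a u)^2 / p a u) / T) := by
      intro v hv
      rw [Finset.mem_compl, hGdef, Finset.mem_filter] at hv
      push_neg at hv
      by_cases hall : ∀ i, 0 < p a (v i)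
      · have hXT := hv (Finset.mem_univ v) hall
        refine le_mul_of_one_le_right (hw0 v) ?_
        rw [le_div_iff₀ hTpos, one_mul]
        exact hXT
      · push_neg at hall
        obtain ⟨i, hi⟩ := hall
        have hzero : p a (v i) = 0 := le_antisymm hi (hp0 a (v i))
        have : ∏ i, p a (v i) = 0 := Finset.prod_eq_zero (Finset.mem_univ i) hzero
        rw [this, zero_mul]
    calc ∑ v ∈ Gᶜ, ∏ i, p a (v i)
        ≤ ∑ v ∈ Gᶜ, (∏ i, p a (v i)) *
            ((∑ u ∈ Finset.univ.filter (fun u : U => 0 < p a u),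
              ((((Finset.univ.filter fun i => v i = u).card : ℕ) : ℝ)/k - p a u)^2 / p a u) / T) :=
          Finset.sum_le_sum hterm
      _ ≤ ∑ v : Fin k → U, (∏ i, p a (v i)) *
            ((∑ u ∈ Finset.univ.filter (fun u : U => 0 < p a u),
              ((((Finset.univ.filter fun i => v i = u).card : ℕ) : ℝ)/k - p a u)^2 / p a u) / T) := by
          apply Finset.sum_le_sum_of_subset_of_nonneg (Finset.subset_univ _)
          intro v _ _
          exact mul_nonneg (hw0 v) (div_nonneg (hXnn v) hTpos.le)
      _ = (∑ v : Fin k → U, (∏ i, p a (v i)) *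
            (∑ u ∈ Finset.univ.filter (fun u : U => 0 < p a u),
              ((((Finset.univ.filter fun i => v i = u).card : ℕ) : ℝ)/k - p a u)^2 / p a u)) / T := by
          rw [Finset.sum_div]
          exact Finset.sum_congr rfl fun v _ => by ring
      _ = (((Finset.univ.filter (fun u : U => 0 < p a u)).card : ℝ) - 1)/k / T := by
          rw [stmt18_exp k hk0 (p a) (hp0 a) (hp1 a)]
      _ ≤ ε := by
          rw [div_div, div_le_iff₀ (by positivity)]
          rw [div_mul_eq_mul_div, div_le_iff₀ (by positivity)] at hk
          have h2 : (k:ℝ) * (ε * da^4) ≤ (k:ℝ) * (ε * (2/(2 - Real.sqrt 3)^2 * T)) := by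
            apply mul_le_mul_of_nonneg_left _ hkR.le
            exact mul_le_mul_of_nonneg_left hL hε.le
          have h3 : ((Finset.univ.filter fun u : U => 0 < p a u).card : ℝ) ≤ (k:ℝ) * ε * T := by
            have h6 : (2/(2 - Real.sqrt 3)^2) *
                ((Finset.univ.filter fun u : U => 0 < p a u).card : ℝ)
                ≤ (2/(2 - Real.sqrt 3)^2) * ((k:ℝ) * ε * T) := by
              calc (2/(2 - Real.sqrt 3)^2) *
                  ((Finset.univ.filter fun u : U => 0 < p a u).card : ℝ)
                  = 2 * ((Finset.univ.filter fun u : U => 0 < p a u).card : ℝ)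
                    / (2 - Real.sqrt 3)^2 := by ring
                _ ≤ (k:ℝ) * (ε * da^4) := hk
                _ ≤ (k:ℝ) * (ε * (2/(2 - Real.sqrt 3)^2 * T)) := h2
                _ = (2/(2 - Real.sqrt 3)^2) * ((k:ℝ) * ε * T) := by ring
            exact le_of_mul_le_mul_left h6 hc1pos
          linarith
  have htotal : ∑ v ∈ G, ∏ i, p a (v i) + ∑ v ∈ Gᶜ, ∏ i, p a (v i) = 1 := by
    rw [Finset.sum_add_sum_compl]
    exact stmt18_M0 k (p a) (hp1 a)
  calc 1 - ε ≤ ∑ v ∈ G, ∏ i, p a (v i) := by linarith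
    _ ≤ ∑ v ∈ Finset.univ.filter (fun v : Fin k → U =>
          ∀ b, b ≠ a → ∏ i, p b (v i) < ∏ i, p a (v i)), ∏ i, p a (v i) :=
        Finset.sum_le_sum_of_subset_of_nonneg hsub fun v _ _ => hw0 v
end
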